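/- arXiv:1902.00870 — 6 statements merged into one kernel-verified Lean document; each statement's English description precedes it below -/
import Mathlib

section
/- If ρ₀, ρ₁, σ are density matrices with ⟨ρ₀, σ⟩ ≥ 1 − δ₀ and ⟨ρ₁, σ⟩ ≥ 1 − δ₁, then ⟨ρ₀, ρ₁⟩ ≥ 1 − 2(δ₀ + δ₁). -/
open Matrix ComplexOrder

/-- A density matrix: positive semidefinite with unit trace. -/
def IsDensity {n : Type*} [Fintype n] [DecidableEq n] (ρ : Matrix n n ℂ) : Prop :=
  ρ.PosSemidef ∧ ρ.trace = 1

/-- The Hilbert–Schmidt "norm squared" of any matrix is nonnegative. -/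
lemma hs_norm_sq_nonneg {n : ℕ} (X : Matrix (Fin n) (Fin n) ℂ) :
    0 ≤ ((Xᴴ * X).trace).re := by
  simp only [trace, diag, mul_apply, conjTranspose_apply, Complex.re_sum]
  apply Finset.sum_nonneg; intro i _
  apply Finset.sum_nonneg; intro j _
  simp [Complex.mul_re, Complex.star_def]
  nlinarith [sq_nonneg (X j i).re, sq_nonneg (X j i).im]

/-- Real parts of Hilbert–Schmidt inner products are symmetric. -/
lemma hs_re_symm {n : ℕ} (X Y : Matrix (Fin n) (Fin n) ℂ) :
    ((Xᴴ * Y).trace).re = ((Yᴴ * X).trace).re := by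
  have : (Xᴴ * Y).trace = star ((Yᴴ * X).trace) := by
    rw [← trace_conjTranspose]; simp [conjTranspose_mul]
  rw [this]; simp

/-- Purity bound: for a density matrix, `Tr(ρᴴρ) ≤ 1`. -/
lemma hs_purity_le_one {n : ℕ} (ρ : Matrix (Fin n) (Fin n) ℂ)
    (h : ρ.PosSemidef ∧ ρ.trace = 1) : ((ρᴴ * ρ).trace).re ≤ 1 := by
  have hH := h.1.1
  set U : Matrix (Fin n) (Fin n) ℂ := (hH.eigenvectorUnitary : Matrix (Fin n) (Fin n) ℂ) with hU
  set D : Matrix (Fin n) (Fin n) ℂ := diagonal (RCLike.ofReal ∘ hH.eigenvalues) with hD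
  have hspec : ρ = U * D * star U := hH.spectral_theorem
  have hUU : star U * U = 1 := Matrix.mem_unitaryGroup_iff'.mp hH.eigenvectorUnitary.2
  have htr : ∀ M : Matrix (Fin n) (Fin n) ℂ, (U * M * star U).trace = M.trace := by
    intro M
    rw [trace_mul_cycle, hUU, one_mul]
  have h1 : ∑ i, hH.eigenvalues i = 1 := by
    have : ρ.trace = ∑ i, (hH.eigenvalues i : ℂ) := by
      conv_lhs => rw [hspec]
      rw [htr, hD, trace_diagonal]; simp
    rw [h.2] at this
    have := congrArg Complex.re this.symm
    simpa using this
  have h2 : ((ρᴴ * ρ).trace).re = ∑ i, (hH.eigenvalues i) ^ 2 := by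
    rw [hH.eq]
    conv_lhs => rw [hspec]
    have : U * D * star U * (U * D * star U) = U * (D * D) * star U := by
      simp only [Matrix.mul_assoc]
      rw [← Matrix.mul_assoc (star U) U, hUU, one_mul]
    rw [this, htr, hD]
    rw [diagonal_mul_diagonal, trace_diagonal]
    simp [sq]
  rw [h2, ← h1]
  apply Finset.sum_le_sum
  intro i _
  have hnn := h.1.eigenvalues_nonneg i
  have hle : hH.eigenvalues i ≤ 1 := by
    rw [← h1]
    exact Finset.single_le_sum (fun j _ => h.1.eigenvalues_nonneg j) (Finset.mem_univ i)
  nlinarith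

/-- If `⟨ρ₀, σ⟩ ≥ 1 − δ₀` and `⟨ρ₁, σ⟩ ≥ 1 − δ₁` for density matrices, then
`⟨ρ₀, ρ₁⟩ ≥ 1 − 2(δ₀ + δ₁)`. -/
theorem inner_product_triangle_eps {n : ℕ} (ρ₀ ρ₁ σ : Matrix (Fin n) (Fin n) ℂ)
    (h₀ : IsDensity ρ₀) (h₁ : IsDensity ρ₁) (hσ : IsDensity σ)
    (δ₀ δ₁ : ℝ) (hδ₀ : 0 ≤ δ₀) (hδ₁ : 0 ≤ δ₁)
    (hi₀ : ((ρ₀ᴴ * σ).trace).re ≥ 1 - δ₀)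
    (hi₁ : ((ρ₁ᴴ * σ).trace).re ≥ 1 - δ₁) :
    ((ρ₀ᴴ * ρ₁).trace).re ≥ 1 - 2 * (δ₀ + δ₁) := by
  set A := ρ₀ - σ with hA
  set B := ρ₁ - σ with hB
  have e1 : ((Aᴴ * A).trace).re
      = ((ρ₀ᴴ * ρ₀).trace).re - ((ρ₀ᴴ * σ).trace).re - ((σᴴ * ρ₀).trace).re
        + ((σᴴ * σ).trace).re := by
    simp only [hA, conjTranspose_sub, Matrix.sub_mul, Matrix.mul_sub, trace_sub,
      Complex.sub_re]
    ring
  have e2 : ((Bᴴ * B).trace).re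
      = ((ρ₁ᴴ * ρ₁).trace).re - ((ρ₁ᴴ * σ).trace).re - ((σᴴ * ρ₁).trace).re
        + ((σᴴ * σ).trace).re := by
    simp only [hB, conjTranspose_sub, Matrix.sub_mul, Matrix.mul_sub, trace_sub,
      Complex.sub_re]
    ring
  have e3 : ((Aᴴ * B).trace).re
      = ((ρ₀ᴴ * ρ₁).trace).re - ((ρ₀ᴴ * σ).trace).re - ((σᴴ * ρ₁).trace).re
        + ((σᴴ * σ).trace).re := by
    simp only [hA, hB, conjTranspose_sub, Matrix.sub_mul, Matrix.mul_sub, trace_sub,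
      Complex.sub_re]
    ring
  have e4 : (((A + B)ᴴ * (A + B)).trace).re
      = ((Aᴴ * A).trace).re + ((Aᴴ * B).trace).re + ((Bᴴ * A).trace).re
        + ((Bᴴ * B).trace).re := by
    simp only [conjTranspose_add, Matrix.add_mul, Matrix.mul_add, trace_add, Complex.add_re]
    ring
  have s0 := hs_re_symm σ ρ₀
  have s1 := hs_re_symm σ ρ₁
  have sAB := hs_re_symm B A
  have nA := hs_norm_sq_nonneg A
  have nB := hs_norm_sq_nonneg B
  have nAB := hs_norm_sq_nonneg (A + B)
  have p0 := hs_purity_le_one ρ₀ h₀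
  have p1 := hs_purity_le_one ρ₁ h₁
  have ps := hs_purity_le_one σ hσ
  linarith
end

section
/- Let Λ be a qubit quantum channel (a completely positive trace-preserving linear map on 2×2 complex matrices), let ω = Λ(𝟙/2), and suppose the spectrum of ω is {λ, 1−λ} with λ ∈ [0, 1/2]. Then for every 2×2 Hermitian matrix Γ with Γ² = 𝟙 and Tr Γ = 0, we have −2√λ · 𝟙 ≤ Λ(Γ) ≤ 2√λ · 𝟙. -/
open Matrix ComplexOrder

/-- A completely positive trace-preserving map, with complete positivity expressed via
positive semidefiniteness of the Choi matrix. -/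
def IsCPTP {m n : Type*} [Fintype m] [DecidableEq m] [Fintype n] [DecidableEq n]
    (Λ : Matrix m m ℂ →ₗ[ℂ] Matrix n n ℂ) : Prop :=
  (Matrix.PosSemidef (Matrix.of fun (p q : m × n) =>
      Λ (Matrix.single p.1 q.1 1) p.2 q.2)) ∧
  ∀ ρ : Matrix m m ℂ, (Λ ρ).trace = ρ.trace

/-!
Write `X = Λ Γ`. Since `Γ` is a Hermitian involution, `𝟙 ± Γ = (𝟙 ± Γ)² / 2 ≥ 0`, so positivity
of `Λ` gives `Λ 𝟙 ± X ≥ 0`, where `Λ 𝟙 = 2ω`. For `2 × 2` matrices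
`det (A + B) + det (A - B) = 2 (det A + det B)`, so `det (2ω) + det X ≥ 0`. As `λ` is an
eigenvalue of the trace-one matrix `ω`, `det ω = λ (1 - λ)`, hence `-det X ≤ 4λ(1 - λ) ≤ 4λ`.
Finally `X` is Hermitian and traceless, so `det (c𝟙 ± X) = c² + det X`, and a `2 × 2` Hermitian
matrix with nonnegative trace and determinant is positive semidefinite; take `c = 2√λ`.
-/

namespace LinearMap

variable {𝕜 m n : Type*} [RCLike 𝕜] [Fintype m] [DecidableEq m] [Fintype n] [DecidableEq n]

def choiMatrix (Λ : Matrix m m 𝕜 →ₗ[𝕜] Matrix n n 𝕜) : Matrix (m × n) (m × n) 𝕜 :=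
  of fun p q => Λ (Matrix.single p.1 q.1 1) p.2 q.2

theorem map_vecMulVec_star_self (Λ : Matrix m m 𝕜 →ₗ[𝕜] Matrix n n 𝕜) (v : m → 𝕜) :
    Λ (vecMulVec v (star v)) =
      (of fun (p : m × n) q => star (v p.1) * (1 : Matrix n n 𝕜) p.2 q)ᴴ * Λ.choiMatrix *
        of fun (p : m × n) q => star (v p.1) * (1 : Matrix n n 𝕜) p.2 q := by
  have hv : vecMulVec v (star v) = ∑ i, ∑ j, (v i * star (v j)) • Matrix.single i j (1 : 𝕜) := by
    simp only [smul_single, smul_eq_mul, mul_one]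
    exact matrix_eq_sum_single _
  rw [hv]
  ext p q
  simp only [map_sum, map_smul, Matrix.sum_apply, Matrix.smul_apply, mul_apply,
    conjTranspose_apply, of_apply, choiMatrix, Fintype.sum_prod_type, one_apply,
    star_star, mul_ite, mul_one, mul_zero, ite_mul, zero_mul, apply_ite (star : 𝕜 → 𝕜), star_zero,
    Finset.sum_ite_eq', Finset.mem_univ, if_true, smul_eq_mul, Finset.sum_mul]
  rw [Finset.sum_comm]
  exact Finset.sum_congr rfl fun i _ => Finset.sum_congr rfl fun j _ => by ring

theorem posSemidef_map_of_posSemidef_choiMatrix {Λ : Matrix m m 𝕜 →ₗ[𝕜] Matrix n n 𝕜}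
    (hΛ : Λ.choiMatrix.PosSemidef) {ρ : Matrix m m 𝕜} (hρ : ρ.PosSemidef) :
    (Λ ρ).PosSemidef := by
  obtain ⟨k, v, rfl⟩ := posSemidef_iff_eq_sum_vecMulVec.mp hρ
  rw [map_sum]
  refine posSemidef_sum _ fun i _ => ?_
  rw [map_vecMulVec_star_self]
  exact hΛ.conjTranspose_mul_mul_same _

end LinearMap

theorem IsCPTP.map_posSemidef {m n : Type*} [Fintype m] [DecidableEq m] [Fintype n]
    [DecidableEq n] {Λ : Matrix m m ℂ →ₗ[ℂ] Matrix n n ℂ} (hΛ : IsCPTP Λ) {ρ : Matrix m m ℂ}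
    (hρ : ρ.PosSemidef) : (Λ ρ).PosSemidef :=
  LinearMap.posSemidef_map_of_posSemidef_choiMatrix hΛ.1 hρ

namespace Matrix

theorem det_fin_two_add_add_det_fin_two_sub {R : Type*} [CommRing R]
    (A B : Matrix (Fin 2) (Fin 2) R) : (A + B).det + (A - B).det = 2 * (A.det + B.det) := by
  simp only [det_fin_two, add_apply, sub_apply]; ring

theorem det_fin_two_smul_one_add {R : Type*} [CommRing R] (c : R) (X : Matrix (Fin 2) (Fin 2) R) :
    (c • 1 + X).det = c ^ 2 + c * X.trace + X.det := by
  simp only [det_fin_two, trace_fin_two, add_apply, smul_apply, smul_eq_mul, one_apply_eq,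
    one_apply_ne zero_ne_one, one_apply_ne one_ne_zero]
  ring

theorem det_fin_two_eq_of_mem_spectrum {K : Type*} [Field K] {A : Matrix (Fin 2) (Fin 2) K} {μ : K}
    (hμ : μ ∈ spectrum K A) : A.det = μ * (A.trace - μ) := by
  rw [mem_spectrum_iff_isRoot_charpoly, charpoly_fin_two, Polynomial.IsRoot.def] at hμ
  simp only [Polynomial.eval_add, Polynomial.eval_sub, Polynomial.eval_pow, Polynomial.eval_X,
    Polynomial.eval_mul, Polynomial.eval_C] at hμ
  linear_combination hμ

variable {𝕜 : Type*} [RCLike 𝕜]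

theorem IsHermitian.posSemidef_of_trace_nonneg_of_det_nonneg {A : Matrix (Fin 2) (Fin 2) 𝕜}
    (hA : A.IsHermitian) (htr : 0 ≤ A.trace) (hdet : 0 ≤ A.det) : A.PosSemidef := by
  rw [hA.trace_eq_sum_eigenvalues, Fin.sum_univ_two] at htr
  rw [hA.det_eq_prod_eigenvalues, Fin.prod_univ_two] at hdet
  have hsum : 0 ≤ hA.eigenvalues 0 + hA.eigenvalues 1 := by exact_mod_cast htr
  have hprod : 0 ≤ hA.eigenvalues 0 * hA.eigenvalues 1 := by exact_mod_cast hdet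
  have h0 : 0 ≤ hA.eigenvalues 0 := by nlinarith
  have h1 : 0 ≤ hA.eigenvalues 1 := by nlinarith
  exact hA.posSemidef_iff_eigenvalues_nonneg.mpr (Fin.forall_fin_two.mpr ⟨h0, h1⟩)

theorem PosSemidef.det_add_det_nonneg {A B : Matrix (Fin 2) (Fin 2) 𝕜} (hP : (A + B).PosSemidef)
    (hQ : (A - B).PosSemidef) : 0 ≤ A.det + B.det := by
  have h := add_nonneg hP.det_nonneg hQ.det_nonneg
  rw [det_fin_two_add_add_det_fin_two_sub] at h
  exact le_of_mul_le_mul_left (by simpa using h) two_pos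

theorem IsHermitian.posSemidef_smul_one_add_of_trace_eq_zero {X : Matrix (Fin 2) (Fin 2) 𝕜}
    (hX : X.IsHermitian) (htr : X.trace = 0) {c : ℝ} (hc : 0 ≤ c) (hdet : 0 ≤ (c : 𝕜) ^ 2 + X.det) :
    ((c : 𝕜) • 1 + X).PosSemidef := by
  have hc1 : ((c : 𝕜) • (1 : Matrix (Fin 2) (Fin 2) 𝕜)).PosSemidef :=
    PosSemidef.one.smul (RCLike.ofReal_nonneg.2 hc)
  refine (hc1.1.add hX).posSemidef_of_trace_nonneg_of_det_nonneg ?_ ?_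
  · rw [trace_add, htr, add_zero]
    exact hc1.trace_nonneg
  · rwa [det_fin_two_smul_one_add, htr, mul_zero, add_zero]

theorem posSemidef_one_add_of_mul_self_eq_one {n : Type*} [Fintype n] [DecidableEq n]
    {Γ : Matrix n n 𝕜} (hΓ : Γ.IsHermitian) (hsq : Γ * Γ = 1) : (1 + Γ).PosSemidef := by
  have h : (1 + Γ)ᴴ * (1 + Γ) = (2 : ℝ) • (1 + Γ) := by
    rw [conjTranspose_add, conjTranspose_one, hΓ.eq, mul_add, add_mul, add_mul, hsq, two_smul]
    simp only [one_mul, mul_one]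
    abel
  rw [← inv_smul_smul₀ (two_ne_zero (α := ℝ)) (1 + Γ), ← h]
  exact (posSemidef_conjTranspose_mul_self _).smul (by norm_num)

end Matrix

/-- If a qubit channel `Λ` maps the maximally mixed state to `ω` with spectrum `{λ, 1−λ}`
for `λ ∈ [0, 1/2]`, then for every Hermitian `Γ` with `Γ² = 𝟙`, `Tr Γ = 0` we have
`−2√λ·𝟙 ≤ Λ(Γ) ≤ 2√λ·𝟙`. -/
theorem spectrum_bound (Λ : Matrix (Fin 2) (Fin 2) ℂ →ₗ[ℂ] Matrix (Fin 2) (Fin 2) ℂ)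
    (hΛ : IsCPTP Λ) (lam : ℝ) (hlam : lam ∈ Set.Icc (0 : ℝ) (1/2))
    (hspec : spectrum ℂ (Λ ((1/2 : ℂ) • 1)) = {(lam : ℂ), ((1 - lam : ℝ) : ℂ)})
    (Γ : Matrix (Fin 2) (Fin 2) ℂ) (hherm : Γ.IsHermitian) (hsq : Γ * Γ = 1)
    (htr : Γ.trace = 0) :
    (((2 * Real.sqrt lam : ℝ) : ℂ) • 1 - Λ Γ).PosSemidef ∧
    (Λ Γ + ((2 * Real.sqrt lam : ℝ) : ℂ) • 1).PosSemidef := by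
  set ω := Λ ((1/2 : ℂ) • 1)
  set X := Λ Γ
  have hΛ1 : Λ 1 = (2 : ℂ) • ω := by rw [← map_smul, smul_smul]; norm_num
  have hP : (Λ 1 + X).PosSemidef := by
    simpa using hΛ.map_posSemidef (posSemidef_one_add_of_mul_self_eq_one hherm hsq)
  have hQ : (Λ 1 - X).PosSemidef := by
    simpa [sub_eq_add_neg] using
      hΛ.map_posSemidef (posSemidef_one_add_of_mul_self_eq_one hherm.neg (by simpa using hsq))
  have hX : X.IsHermitian := by simpa using hP.1.sub (hΛ.map_posSemidef PosSemidef.one).1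
  have htrX : X.trace = 0 := by rw [hΛ.2, htr]
  have hdetω : ω.det = lam * (1 - lam) := by
    have hmem : (lam : ℂ) ∈ spectrum ℂ ω := hspec ▸ Set.mem_insert _ _
    rw [det_fin_two_eq_of_mem_spectrum hmem, hΛ.2]
    norm_num
  have hdetX : 0 ≤ ((2 * √lam : ℝ) : ℂ) ^ 2 + X.det := by
    have h := hP.det_add_det_nonneg hQ
    rw [hΛ1, det_smul, Fintype.card_fin, hdetω] at h
    calc (0 : ℂ) ≤ 4 * lam ^ 2 + (2 ^ 2 * (lam * (1 - lam)) + X.det) :=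
          add_nonneg (by norm_cast; positivity) h
      _ = ((2 * √lam : ℝ) : ℂ) ^ 2 + X.det := by
          push_cast; rw [mul_pow, ← Complex.ofReal_pow √lam, Real.sq_sqrt hlam.1]; ring
  have hc : 0 ≤ 2 * √lam := by positivity
  constructor
  · simpa [sub_eq_add_neg] using hX.neg.posSemidef_smul_one_add_of_trace_eq_zero
      (by simp [htrX]) hc (by simpa [det_neg] using hdetX)
  · rw [add_comm]
    exact hX.posSemidef_smul_one_add_of_trace_eq_zero htrX hc hdetX
end

section
/- Let Φ be a pure state on H_{A'} ⊗ H_{B'} and ρ any density matrix on H_A ⊗ H_B. If there exist quantum channels Λ_A : L(H_A) → L(H_{A'}) and Λ_B : L(H_B) → L(H_{B'}) with (Λ_A ⊗ Λ_B)(ρ) = Φ, then there exist Hilbert spaces H_{A''}, H_{B''}, isometries V_X : H_X → H_{X'} ⊗ H_{X''} (X ∈ {A, B}), and a state σ on H_{A''} ⊗ H_{B''} such that (V_A ⊗ V_B) ρ (V_A ⊗ V_B)† = Φ ⊗ σ. -/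
open Matrix ComplexOrder Kronecker

/-- The tensor product `Λ_A ⊗ Λ_B` of two linear maps on matrix spaces, applied to a
bipartite matrix. -/
noncomputable def tensorMap {a b a' b' : Type*}
    [Fintype a] [DecidableEq a] [Fintype b] [DecidableEq b]
    [Fintype a'] [DecidableEq a'] [Fintype b'] [DecidableEq b']
    (ΛA : Matrix a a ℂ →ₗ[ℂ] Matrix a' a' ℂ) (ΛB : Matrix b b ℂ →ₗ[ℂ] Matrix b' b' ℂ)
    (ρ : Matrix (a × b) (a × b) ℂ) : Matrix (a' × b') (a' × b') ℂ :=
  ∑ i, ∑ j, ∑ k, ∑ l, ρ (i, k) (j, l) •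
    (ΛA (Matrix.single i j 1)) ⊗ₖ (ΛB (Matrix.single k l 1))

/-!
Stinespring: the Choi matrix of a channel `Λ` is a sum `∑ r, v r (v r)†`, and reading the
vectors `v r` as the columns `V (·, r)` gives `Λ ρ = Tr_env (V ρ V†)`; trace preservation makes
`V` an isometry. The state `W = (V_A ⊗ V_B) ρ (V_A ⊗ V_B)†` then has marginal
`(Λ_A ⊗ Λ_B) ρ = Φ` on `A'B'`. A state whose marginal is a projection `Φ` lives on
`range Φ ⊗ H`: with `P = Φ ⊗ 1`, `Tr ((1 - P) W (1 - P)) = Tr (Φ (1 - Φ)) = 0`, so `W = P W P`.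
Since `Φ` has rank one, every block `P W_{kl} P` is a multiple of `Φ`, i.e. `W = Φ ⊗ σ`.
-/

namespace Matrix

section PartialTrace

variable {m n R : Type*} [CommSemiring R]

def partialTraceRight [Fintype n] : Matrix (m × n) (m × n) R →ₗ[R] Matrix m m R where
  toFun W := of fun i j => ∑ k, W (i, k) (j, k)
  map_add' W W' := by ext; simp [Finset.sum_add_distrib]
  map_smul' c W := by ext; simp [Finset.mul_sum]

def partialTraceLeft [Fintype m] : Matrix (m × n) (m × n) R →ₗ[R] Matrix n n R where
  toFun W := of fun k l => ∑ i, W (i, k) (i, l)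
  map_add' W W' := by ext; simp [Finset.sum_add_distrib]
  map_smul' c W := by ext; simp [Finset.mul_sum]

@[simp]
lemma partialTraceRight_apply [Fintype n] (W : Matrix (m × n) (m × n) R) (i j : m) :
    partialTraceRight W i j = ∑ k, W (i, k) (j, k) := rfl

@[simp]
lemma partialTraceLeft_apply [Fintype m] (W : Matrix (m × n) (m × n) R) (k l : n) :
    partialTraceLeft W k l = ∑ i, W (i, k) (i, l) := rfl

lemma partialTraceRight_eq_sum_submatrix [Fintype n] (W : Matrix (m × n) (m × n) R) :
    partialTraceRight W = ∑ k, W.submatrix (·, k) (·, k) := by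
  ext; simp [Matrix.sum_apply]

lemma partialTraceLeft_eq_sum_submatrix [Fintype m] (W : Matrix (m × n) (m × n) R) :
    partialTraceLeft W = ∑ i, W.submatrix (i, ·) (i, ·) := by
  ext; simp [Matrix.sum_apply]

variable [Fintype m] [Fintype n] (W : Matrix (m × n) (m × n) R)

@[simp]
lemma trace_partialTraceRight : (partialTraceRight W).trace = W.trace := by
  simp [trace, Fintype.sum_prod_type]

@[simp]
lemma trace_partialTraceLeft : (partialTraceLeft W).trace = W.trace := by
  simp [trace, Fintype.sum_prod_type, Finset.sum_comm (γ := n)]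

lemma partialTraceRight_mul_kronecker_one [DecidableEq n] (Q : Matrix m m R) :
    partialTraceRight (W * (Q ⊗ₖ (1 : Matrix n n R))) = partialTraceRight W * Q := by
  ext i j
  simp only [partialTraceRight_apply, mul_apply, kroneckerMap_apply, one_apply, mul_ite, mul_one,
    mul_zero, Fintype.sum_prod_type, Finset.sum_ite_eq', Finset.mem_univ, ↓reduceIte,
    Finset.sum_mul]
  exact Finset.sum_comm

lemma kronecker_one_mul_mul_kronecker_one_apply [DecidableEq n] (A B : Matrix m m R)
    (x y : m) (k l : n) :
    ((A ⊗ₖ (1 : Matrix n n R)) * W * (B ⊗ₖ (1 : Matrix n n R))) (x, k) (y, l)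
      = (A * W.submatrix (·, k) (·, l) * B) x y := by
  simp [mul_apply, Fintype.sum_prod_type, one_apply, Finset.sum_mul]

end PartialTrace

lemma partialTraceRight_reindex_kronecker {R a b p q : Type*} [CommSemiring R] [Fintype p]
    [Fintype q] (X : Matrix (a × p) (a × p) R) (Y : Matrix (b × q) (b × q) R) :
    partialTraceRight (reindex (Equiv.prodProdProdComm a p b q) (Equiv.prodProdProdComm a p b q)
      (X ⊗ₖ Y)) = partialTraceRight X ⊗ₖ partialTraceRight Y := by
  ext ⟨i, k⟩ ⟨j, l⟩
  simp [Fintype.sum_prod_type, Finset.sum_mul_sum]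

lemma PosSemidef.partialTraceRight {R m n : Type*} [CommRing R] [PartialOrder R] [StarRing R]
    [AddLeftMono R] [Fintype n] {W : Matrix (m × n) (m × n) R} (hW : W.PosSemidef) :
    (Matrix.partialTraceRight W).PosSemidef :=
  partialTraceRight_eq_sum_submatrix W ▸ posSemidef_sum _ fun _ _ => hW.submatrix _

lemma PosSemidef.partialTraceLeft {R m n : Type*} [CommRing R] [PartialOrder R] [StarRing R]
    [AddLeftMono R] [Fintype m] {W : Matrix (m × n) (m × n) R} (hW : W.PosSemidef) :
    (Matrix.partialTraceLeft W).PosSemidef :=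
  partialTraceLeft_eq_sum_submatrix W ▸ posSemidef_sum _ fun _ _ => hW.submatrix _

lemma PosSemidef.mul_eq_zero_of_trace_conjTranspose_mul_mul_eq_zero {𝕜 m n : Type*} [RCLike 𝕜]
    [Fintype m] [Fintype n] {W : Matrix n n 𝕜} (hW : W.PosSemidef) {X : Matrix n m 𝕜}
    (h : (Xᴴ * W * X).trace = 0) : W * X = 0 := by
  classical
  open scoped MatrixOrder in
  obtain ⟨B, rfl⟩ := CStarAlgebra.nonneg_iff_eq_star_mul_self.mp hW.nonneg
  rw [star_eq_conjTranspose] at h ⊢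
  have hBX : B * X = 0 := by
    rwa [← trace_conjTranspose_mul_self_eq_zero_iff, conjTranspose_mul, Matrix.mul_assoc,
      ← Matrix.mul_assoc Bᴴ, ← Matrix.mul_assoc]
  rw [Matrix.mul_assoc, hBX, Matrix.mul_zero]

/-- Trace equals rank for idempotents, so `P` is a rank-one projection. -/
lemma IsIdempotentElem.mul_mul_eq_trace_smul {K n : Type*} [Field K] [CharZero K] [Fintype n]
    [DecidableEq n] {P : Matrix n n K} (hP : IsIdempotentElem P) (htr : P.trace = 1)
    (M : Matrix n n K) : P * M * P = (P * M).trace • P := by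
  have hrank : Module.finrank K (LinearMap.range (toLin' P)) = 1 := by
    have hPlin : IsIdempotentElem (toLin' P) := hP.map toLinAlgEquiv'
    have := ((LinearMap.isProj_range_iff_isIdempotentElem _).mpr hPlin).trace
    rw [trace_toLin'_eq, htr] at this
    exact_mod_cast this.symm
  obtain ⟨⟨u, _⟩, -, hspan⟩ := finrank_eq_one_iff'.mp hrank
  obtain ⟨c, hc⟩ := hspan ⟨P *ᵥ M *ᵥ u, LinearMap.mem_range_self _ _⟩
  have hPMP : P * M * P = c • P := by
    refine ext_iff_mulVec.mpr fun v => ?_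
    obtain ⟨a, ha⟩ := hspan ⟨P *ᵥ v, LinearMap.mem_range_self _ _⟩
    simp only [Subtype.ext_iff, SetLike.val_smul] at ha hc
    rw [← mulVec_mulVec, ← mulVec_mulVec, smul_mulVec, ← ha, mulVec_smul, mulVec_smul, ← hc,
      smul_comm]
  have hc : c = (P * M).trace := by
    have := congrArg trace hPMP
    rwa [trace_smul, htr, smul_eq_mul, mul_one, trace_mul_comm, ← Matrix.mul_assoc, hP.eq,
      eq_comm] at this
  rw [hPMP, hc]

section PureMarginal

variable {𝕜 m n : Type*} [RCLike 𝕜] [Fintype m] [Fintype n] [DecidableEq m] [DecidableEq n]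
  {W : Matrix (m × n) (m × n) 𝕜}

lemma PosSemidef.mul_partialTraceRight_kronecker_one (hW : W.PosSemidef)
    (hproj : IsIdempotentElem (Matrix.partialTraceRight W)) :
    W * (Matrix.partialTraceRight W ⊗ₖ (1 : Matrix n n 𝕜)) = W := by
  set P := Matrix.partialTraceRight W ⊗ₖ (1 : Matrix n n 𝕜)
  have hP : IsIdempotentElem P := by
    rw [IsIdempotentElem, ← mul_kronecker_mul, hproj.eq, Matrix.one_mul]
  have hQ : (1 - P)ᴴ = 1 - P := by
    simp [P, conjTranspose_kronecker, hW.partialTraceRight.isHermitian.eq]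
  have hWQ : W * (1 - P) = 0 := by
    refine hW.mul_eq_zero_of_trace_conjTranspose_mul_mul_eq_zero ?_
    rw [hQ, Matrix.mul_assoc, trace_mul_comm, Matrix.mul_assoc, hP.one_sub.eq, Matrix.mul_sub,
      Matrix.mul_one, trace_sub, ← trace_partialTraceRight, ← trace_partialTraceRight (W * P),
      partialTraceRight_mul_kronecker_one, hproj.eq, sub_self]
  rwa [Matrix.mul_sub, Matrix.mul_one, sub_eq_zero, eq_comm] at hWQ

theorem PosSemidef.eq_partialTraceRight_kronecker_partialTraceLeft (hW : W.PosSemidef)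
    (hpure : IsIdempotentElem (Matrix.partialTraceRight W)) (htr : W.trace = 1) :
    W = Matrix.partialTraceRight W ⊗ₖ Matrix.partialTraceLeft W := by
  set Φ := Matrix.partialTraceRight W
  have hWP : W * (Φ ⊗ₖ (1 : Matrix n n 𝕜)) = W := hW.mul_partialTraceRight_kronecker_one hpure
  have hΦ : Φᴴ = Φ := hW.partialTraceRight.isHermitian.eq
  have hPW : (Φ ⊗ₖ (1 : Matrix n n 𝕜)) * W = W := by
    simpa [conjTranspose_kronecker, hΦ, hW.isHermitian.eq] using congrArg (·ᴴ) hWP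
  have hblock : ∀ k l,
      W.submatrix (·, k) (·, l) = (Φ * W.submatrix (·, k) (·, l)).trace • Φ := by
    intro k l
    rw [← hpure.mul_mul_eq_trace_smul (by rwa [trace_partialTraceRight])]
    ext x y
    rw [← kronecker_one_mul_mul_kronecker_one_apply, hPW, hWP, submatrix_apply]
  ext ⟨x, k⟩ ⟨y, l⟩
  have hσ : Matrix.partialTraceLeft W k l = (Φ * W.submatrix (·, k) (·, l)).trace := by
    have := congrArg trace (hblock k l)
    rwa [trace_smul, trace_partialTraceRight, htr, smul_eq_mul, mul_one] at this
  rw [kroneckerMap_apply, hσ, mul_comm]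
  exact congrFun (congrFun (hblock k l) x) y

end PureMarginal

end Matrix

theorem IsCPTP.exists_isometry_partialTraceRight {m n : Type*} [Fintype m] [DecidableEq m]
    [Fintype n] [DecidableEq n] {Λ : Matrix m m ℂ →ₗ[ℂ] Matrix n n ℂ} (hΛ : IsCPTP Λ) :
    ∃ (r : ℕ) (V : Matrix (n × Fin r) m ℂ),
      Vᴴ * V = 1 ∧ ∀ ρ, Λ ρ = partialTraceRight (V * ρ * Vᴴ) := by
  obtain ⟨r, v, hv⟩ := posSemidef_iff_eq_sum_vecMulVec.mp hΛ.1
  let V : Matrix (n × Fin r) m ℂ := of fun p i => v p.2 (i, p.1)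
  have hdil : ∀ ρ, Λ ρ = partialTraceRight (V * ρ * Vᴴ) := by
    intro ρ
    induction ρ using Matrix.induction_on' with
    | h_zero => simp
    | h_add p q hp hq => simp [hp, hq, Matrix.mul_add, Matrix.add_mul]
    | h_std_basis i j x =>
      ext a c
      have hchoi := congrFun (congrFun hv (i, a)) (j, c)
      rw [show single i j x = x • single i j 1 by simp, map_smul]
      simp only [of_apply] at hchoi
      simp [V, hchoi, mul_apply, single_apply, Matrix.sum_apply, vecMulVec_apply, ite_and,
        Finset.mul_sum, mul_assoc, mul_left_comm _ x]
  refine ⟨r, V, ext_iff_trace_mul_right.mpr fun ρ => ?_, hdil⟩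
  rw [← trace_mul_cycle, ← trace_partialTraceRight, ← hdil, hΛ.2, Matrix.one_mul]

lemma tensorMap_single {a b a' b' : Type*}
    [Fintype a] [DecidableEq a] [Fintype b] [DecidableEq b]
    [Fintype a'] [DecidableEq a'] [Fintype b'] [DecidableEq b']
    (ΛA : Matrix a a ℂ →ₗ[ℂ] Matrix a' a' ℂ) (ΛB : Matrix b b ℂ →ₗ[ℂ] Matrix b' b' ℂ)
    (i j : a) (k l : b) (x : ℂ) :
    tensorMap ΛA ΛB (single (i, k) (j, l) x) = x • ΛA (single i j 1) ⊗ₖ ΛB (single k l 1) := by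
  simp [tensorMap, single_apply, ite_and, ite_smul]

lemma tensorMap_add {a b a' b' : Type*}
    [Fintype a] [DecidableEq a] [Fintype b] [DecidableEq b]
    [Fintype a'] [DecidableEq a'] [Fintype b'] [DecidableEq b']
    (ΛA : Matrix a a ℂ →ₗ[ℂ] Matrix a' a' ℂ) (ΛB : Matrix b b ℂ →ₗ[ℂ] Matrix b' b' ℂ)
    (ρ σ : Matrix (a × b) (a × b) ℂ) :
    tensorMap ΛA ΛB (ρ + σ) = tensorMap ΛA ΛB ρ + tensorMap ΛA ΛB σ := by
  simp [tensorMap, add_smul, Finset.sum_add_distrib]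

theorem tensorMap_eq_partialTraceRight {a b a' b' p q : Type*}
    [Fintype a] [DecidableEq a] [Fintype b] [DecidableEq b]
    [Fintype a'] [DecidableEq a'] [Fintype b'] [DecidableEq b'] [Fintype p] [Fintype q]
    {ΛA : Matrix a a ℂ →ₗ[ℂ] Matrix a' a' ℂ} {ΛB : Matrix b b ℂ →ₗ[ℂ] Matrix b' b' ℂ}
    {VA : Matrix (a' × p) a ℂ} {VB : Matrix (b' × q) b ℂ}
    (hA : ∀ ρ, ΛA ρ = partialTraceRight (VA * ρ * VAᴴ))
    (hB : ∀ ρ, ΛB ρ = partialTraceRight (VB * ρ * VBᴴ)) (ρ : Matrix (a × b) (a × b) ℂ) :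
    tensorMap ΛA ΛB ρ = partialTraceRight (reindex (Equiv.prodProdProdComm a' p b' q)
      (Equiv.prodProdProdComm a' p b' q) ((VA ⊗ₖ VB) * ρ * (VA ⊗ₖ VB)ᴴ)) := by
  induction ρ using Matrix.induction_on' with
  | h_zero => simp [tensorMap]
  | h_add ρ σ hρ hσ =>
    rw [tensorMap_add, hρ, hσ, Matrix.mul_add, Matrix.add_mul, ← map_add]
    rfl
  | h_std_basis ik jl x =>
    obtain ⟨i, k⟩ := ik
    obtain ⟨j, l⟩ := jl
    rw [tensorMap_single, hA, hB, ← partialTraceRight_reindex_kronecker, mul_kronecker_mul,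
      mul_kronecker_mul, single_kronecker_single, one_mul, ← conjTranspose_kronecker, ← map_smul,
      show single (i, k) (j, l) x = x • single (i, k) (j, l) 1 by simp, Matrix.mul_smul,
      Matrix.smul_mul]
    rfl

/-- If local channels extract a perfect copy of a pure state `Φ` from `ρ`, then there
exist local isometries `V_A, V_B` and an auxiliary state `σ` with
`(V_A ⊗ V_B) ρ (V_A ⊗ V_B)† = Φ ⊗ σ`. -/
theorem channel_to_isometry {dA dB dA' dB' : ℕ}
    (Φ : Matrix (Fin dA' × Fin dB') (Fin dA' × Fin dB') ℂ)
    (hΦ : IsDensity Φ) (hpure : Φ * Φ = Φ)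
    (ρ : Matrix (Fin dA × Fin dB) (Fin dA × Fin dB) ℂ) (hρ : IsDensity ρ)
    (ΛA : Matrix (Fin dA) (Fin dA) ℂ →ₗ[ℂ] Matrix (Fin dA') (Fin dA') ℂ)
    (ΛB : Matrix (Fin dB) (Fin dB) ℂ →ₗ[ℂ] Matrix (Fin dB') (Fin dB') ℂ)
    (hA : IsCPTP ΛA) (hB : IsCPTP ΛB)
    (hext : tensorMap ΛA ΛB ρ = Φ) :
    ∃ (dA'' dB'' : ℕ)
      (VA : Matrix (Fin dA' × Fin dA'') (Fin dA) ℂ)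
      (VB : Matrix (Fin dB' × Fin dB'') (Fin dB) ℂ)
      (σ : Matrix (Fin dA'' × Fin dB'') (Fin dA'' × Fin dB'') ℂ),
      VAᴴ * VA = 1 ∧ VBᴴ * VB = 1 ∧ IsDensity σ ∧
      Matrix.reindex
          (Equiv.prodProdProdComm (Fin dA') (Fin dA'') (Fin dB') (Fin dB''))
          (Equiv.prodProdProdComm (Fin dA') (Fin dA'') (Fin dB') (Fin dB''))
          ((Matrix.kroneckerMap (· * ·) VA VB) * ρ * (Matrix.kroneckerMap (· * ·) VA VB)ᴴ)
        = Φ ⊗ₖ σ := by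
  obtain ⟨rA, VA, hVA, hΛA⟩ := hA.exists_isometry_partialTraceRight
  obtain ⟨rB, VB, hVB, hΛB⟩ := hB.exists_isometry_partialTraceRight
  set W := reindex (Equiv.prodProdProdComm (Fin dA') (Fin rA) (Fin dB') (Fin rB))
    (Equiv.prodProdProdComm (Fin dA') (Fin rA) (Fin dB') (Fin rB)) ((VA ⊗ₖ VB) * ρ * (VA ⊗ₖ VB)ᴴ)
  have hmarg : partialTraceRight W = Φ := (tensorMap_eq_partialTraceRight hΛA hΛB ρ).symm.trans hext
  have hW : W.PosSemidef := (hρ.1.mul_mul_conjTranspose_same _).submatrix _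
  have htr : W.trace = 1 := by rw [← trace_partialTraceRight, hmarg, hΦ.2]
  refine ⟨rA, rB, VA, VB, partialTraceLeft W, hVA, hVB,
    ⟨hW.partialTraceLeft, by rwa [trace_partialTraceLeft]⟩, ?_⟩
  rw [← hmarg]
  exact hW.eq_partialTraceRight_kronecker_partialTraceLeft (hmarg ▸ hpure) htr
end

section
/- For a pure target state Φ with largest Schmidt coefficient λ₀ and any separable state ρ, the extractability satisfies Ξ(ρ → Φ) = λ₀². In particular, for any product state ρ_A ⊗ ρ_B and any local channels Λ_A, Λ_B, the fidelity F((Λ_A ⊗ Λ_B)(ρ_A ⊗ ρ_B), Φ) ≤ λ₀², with equality attainable. -/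
open Matrix ComplexOrder Kronecker

/-!
Write `φ = ∑ₛ cₛ uₛ ⊗ vₛ`. For density matrices `σ_A = R⋆R`, `σ_B = S⋆S` one has
`⟨φ, (σ_A ⊗ σ_B) φ⟩ = ∑ₛₜ cₛ cₜ ⟪R uₛ, R uₜ⟫ ⟪S vₛ, S vₜ⟫ ≤ (∑ₛ cₛ ‖R uₛ‖ ‖S vₛ‖)²
≤ λ₀² (∑ₛ ‖R uₛ‖²) (∑ₛ ‖S vₛ‖²)`, and by Bessel's inequality for the orthonormal families
`uₛ`, `vₛ` each of the last two sums is at most the trace `1`. Local channels send product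
states to product states (positivity of the Choi matrix makes them preserve density matrices), and
they act linearly on a separable mixture, so the bound `λ₀²` holds for every separable input.
Replacing both local states by `|u_{s₀}⟩⟨u_{s₀}|` and `|v_{s₀}⟩⟨v_{s₀}|`, where `c_{s₀} = λ₀`,
attains it.
-/

open Finset WithLp

section InnerProduct

variable {𝕜 ι : Type*} [RCLike 𝕜]

theorem re_sum_mul_inner_mul_inner_le [Fintype ι] {E F : Type*} [NormedAddCommGroup E]
    [InnerProductSpace 𝕜 E] [NormedAddCommGroup F] [InnerProductSpace 𝕜 F]
    {c : ι → ℝ} {lam : ℝ} (hc : ∀ s, 0 ≤ c s) (hle : ∀ s, c s ≤ lam) (x : ι → E) (y : ι → F)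
    (hx : ∑ s, ‖x s‖ ^ 2 ≤ 1) (hy : ∑ s, ‖y s‖ ^ 2 ≤ 1) :
    RCLike.re (∑ s, ∑ t, ((c s * c t : ℝ) : 𝕜) * (inner 𝕜 (x s) (x t) * inner 𝕜 (y s) (y t)))
      ≤ lam ^ 2 := by
  set g : ι → ℝ := fun s => ‖x s‖ * ‖y s‖
  have hterm : ∀ s t, RCLike.re (((c s * c t : ℝ) : 𝕜) *
      (inner 𝕜 (x s) (x t) * inner 𝕜 (y s) (y t))) ≤ c s * g s * (c t * g t) := by
    intro s t
    have hcc : 0 ≤ c s * c t := mul_nonneg (hc s) (hc t)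
    refine (RCLike.re_le_norm _).trans ?_
    rw [norm_mul, norm_mul, RCLike.norm_ofReal, abs_of_nonneg hcc]
    calc c s * c t * (‖inner 𝕜 (x s) (x t)‖ * ‖inner 𝕜 (y s) (y t)‖)
        ≤ c s * c t * (‖x s‖ * ‖x t‖ * (‖y s‖ * ‖y t‖)) := by
          gcongr <;> exact norm_inner_le_norm _ _
      _ = c s * g s * (c t * g t) := by ring
  calc RCLike.re (∑ s, ∑ t, ((c s * c t : ℝ) : 𝕜) * (inner 𝕜 (x s) (x t) * inner 𝕜 (y s) (y t)))
      ≤ ∑ s, ∑ t, c s * g s * (c t * g t) := by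
        simp only [map_sum]
        exact sum_le_sum fun s _ => sum_le_sum fun t _ => hterm s t
    _ = (∑ s, c s * g s) ^ 2 := by rw [sq, sum_mul_sum]
    _ ≤ (lam * ∑ s, g s) ^ 2 := by
        rw [mul_sum]
        gcongr with s
        · exact sum_nonneg fun s _ => mul_nonneg (hc s) (by positivity)
        · exact hle s
    _ ≤ lam ^ 2 * ((∑ s, ‖x s‖ ^ 2) * ∑ s, ‖y s‖ ^ 2) := by
        rw [mul_pow]
        gcongr
        exact sum_mul_sq_le_sq_mul_sq _ _ _
    _ ≤ lam ^ 2 := mul_le_of_le_one_right (sq_nonneg lam)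
        (mul_le_one₀ hx (sum_nonneg fun s _ => by positivity) hy)

variable {k n : Type*} [Fintype k] [Fintype n]

theorem orthonormal_toLp_iff [DecidableEq ι] {u : ι → n → 𝕜} :
    Orthonormal 𝕜 (fun s => toLp 2 (u s)) ↔ ∀ s t, star (u s) ⬝ᵥ u t = if s = t then 1 else 0 := by
  simp only [orthonormal_iff_ite, EuclideanSpace.inner_toLp_toLp, dotProduct_comm]

theorem star_dotProduct_conjTranspose_mul_self_mulVec (R : Matrix k n 𝕜) (x y : n → 𝕜) :
    star x ⬝ᵥ ((Rᴴ * R) *ᵥ y) = inner 𝕜 (toLp 2 (R *ᵥ x)) (toLp 2 (R *ᵥ y)) := by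
  rw [EuclideanSpace.inner_toLp_toLp, ← mulVec_mulVec, dotProduct_mulVec, vecMul_conjTranspose,
    star_star, dotProduct_comm]

theorem re_trace_conjTranspose_mul_self (R : Matrix k n 𝕜) :
    RCLike.re (Rᴴ * R).trace = ∑ r, ‖toLp 2 (star (R r))‖ ^ 2 := by
  simp only [trace, Matrix.diag, mul_apply, conjTranspose_apply, EuclideanSpace.norm_sq_eq,
    Pi.star_apply, RCLike.norm_conj, map_sum, RCLike.star_def, RCLike.conj_mul]
  rw [sum_comm]
  norm_cast

theorem sum_norm_mulVec_sq_le_re_trace [Fintype ι] (R : Matrix k n 𝕜) {u : ι → n → 𝕜}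
    (hu : Orthonormal 𝕜 fun s => toLp 2 (u s)) :
    ∑ s, ‖toLp 2 (R *ᵥ u s)‖ ^ 2 ≤ RCLike.re (Rᴴ * R).trace := by
  have hrow : ∀ s r, ‖(R *ᵥ u s) r‖ = ‖inner 𝕜 (toLp 2 (u s)) (toLp 2 (star (R r)))‖ := by
    intro s r
    rw [norm_inner_symm, EuclideanSpace.inner_toLp_toLp, star_star, dotProduct_comm]
    rfl
  calc ∑ s, ‖toLp 2 (R *ᵥ u s)‖ ^ 2
      = ∑ r, ∑ s, ‖inner 𝕜 (toLp 2 (u s)) (toLp 2 (star (R r)))‖ ^ 2 := by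
        simp only [EuclideanSpace.norm_sq_eq, hrow]
        exact sum_comm
    _ ≤ ∑ r, ‖toLp 2 (star (R r))‖ ^ 2 := sum_le_sum fun r _ => hu.sum_inner_products_le _
    _ = RCLike.re (Rᴴ * R).trace := (re_trace_conjTranspose_mul_self R).symm

theorem Matrix.PosSemidef.exists_eq_conjTranspose_mul_self [DecidableEq n] {A : Matrix n n 𝕜}
    (hA : A.PosSemidef) : ∃ B : Matrix n n 𝕜, A = Bᴴ * B := by
  open scoped MatrixOrder in
  exact CStarAlgebra.nonneg_iff_eq_star_mul_self.mp hA.nonneg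

theorem trace_mul_vecMulVec_star (M : Matrix n n 𝕜) (φ : n → 𝕜) :
    (M * vecMulVec φ (star φ)).trace = star φ ⬝ᵥ (M *ᵥ φ) := by
  rw [trace_mul_comm, vecMulVec_mul, trace_vecMulVec, dotProduct_comm, ← dotProduct_mulVec]

theorem star_dotProduct_vecMulVec_star_mulVec (x y z : n → 𝕜) :
    star x ⬝ᵥ (vecMulVec y (star y) *ᵥ z) = (star x ⬝ᵥ y) * (star y ⬝ᵥ z) := by
  rw [vecMulVec_mulVec, op_smul_eq_smul, dotProduct_smul, smul_eq_mul, mul_comm]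

theorem star_dotProduct_kronecker_mulVec {a b : Type*} [Fintype a] [Fintype b]
    (σA : Matrix a a 𝕜) (σB : Matrix b b 𝕜) (x x' : a → 𝕜) (y y' : b → 𝕜) :
    star (fun p : a × b => x p.1 * y p.2) ⬝ᵥ ((σA ⊗ₖ σB) *ᵥ fun p => x' p.1 * y' p.2)
      = (star x ⬝ᵥ (σA *ᵥ x')) * (star y ⬝ᵥ (σB *ᵥ y')) := by
  simp only [dotProduct, mulVec, Fintype.sum_prod_type, kroneckerMap_apply, Pi.star_apply,
    star_mul', sum_mul_sum]
  refine sum_congr rfl fun i _ => sum_congr rfl fun j _ => ?_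
  rw [mul_mul_mul_comm, sum_mul_sum]
  simp only [mul_sum]
  refine sum_congr rfl fun k _ => sum_congr rfl fun l _ => ?_
  ring

end InnerProduct

section SchmidtVector

variable {ι a b : Type*} [Fintype ι] [Fintype a] [Fintype b]

def schmidtVector (c : ι → ℝ) (u : ι → a → ℂ) (v : ι → b → ℂ) : a × b → ℂ :=
  fun p => ∑ s, (c s : ℂ) * u s p.1 * v s p.2

theorem star_schmidtVector_dotProduct_kronecker_mulVec (c : ι → ℝ) (u : ι → a → ℂ)
    (v : ι → b → ℂ) (σA : Matrix a a ℂ) (σB : Matrix b b ℂ) :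
    star (schmidtVector c u v) ⬝ᵥ ((σA ⊗ₖ σB) *ᵥ schmidtVector c u v)
      = ∑ s, ∑ t, ((c s * c t : ℝ) : ℂ) *
          ((star (u s) ⬝ᵥ (σA *ᵥ u t)) * (star (v s) ⬝ᵥ (σB *ᵥ v t))) := by
  have hsum : schmidtVector c u v = ∑ s, (c s : ℂ) • fun p : a × b => u s p.1 * v s p.2 := by
    ext p
    simp [schmidtVector, mul_assoc]
  simp only [hsum, star_sum, star_smul, mulVec_sum, mulVec_smul, sum_dotProduct, dotProduct_sum,
    smul_dotProduct, dotProduct_smul, star_dotProduct_kronecker_mulVec, Complex.star_def,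
    Complex.conj_ofReal, smul_eq_mul]
  rw [sum_comm]
  refine sum_congr rfl fun s _ => ?_
  rw [mul_sum]
  refine sum_congr rfl fun t _ => ?_
  push_cast
  ring

theorem trace_vecMulVec_kronecker_vecMulVec_mul_schmidtVector {c : ι → ℝ} {u : ι → a → ℂ}
    {v : ι → b → ℂ} [DecidableEq ι]
    (hu : ∀ s t, star (u s) ⬝ᵥ u t = if s = t then 1 else 0)
    (hv : ∀ s t, star (v s) ⬝ᵥ v t = if s = t then 1 else 0) (s₀ : ι) :
    ((vecMulVec (u s₀) (star (u s₀)) ⊗ₖ vecMulVec (v s₀) (star (v s₀))) *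
        vecMulVec (schmidtVector c u v) (star (schmidtVector c u v))).trace = (c s₀ ^ 2 : ℝ) := by
  rw [trace_mul_vecMulVec_star, star_schmidtVector_dotProduct_kronecker_mulVec]
  simp [star_dotProduct_vecMulVec_star_mulVec, hu, hv, sq]

variable [DecidableEq a] [DecidableEq b]

theorem re_trace_kronecker_mul_schmidtVector_le {c : ι → ℝ} {lam : ℝ} (hc : ∀ s, 0 ≤ c s)
    (hle : ∀ s, c s ≤ lam) {u : ι → a → ℂ} {v : ι → b → ℂ}
    (hu : Orthonormal ℂ fun s => toLp 2 (u s)) (hv : Orthonormal ℂ fun s => toLp 2 (v s))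
    {σA : Matrix a a ℂ} {σB : Matrix b b ℂ} (hσA : IsDensity σA) (hσB : IsDensity σB) :
    (((σA ⊗ₖ σB) * vecMulVec (schmidtVector c u v) (star (schmidtVector c u v))).trace).re
      ≤ lam ^ 2 := by
  obtain ⟨R, rfl⟩ := hσA.1.exists_eq_conjTranspose_mul_self
  obtain ⟨S, rfl⟩ := hσB.1.exists_eq_conjTranspose_mul_self
  have hRu := sum_norm_mulVec_sq_le_re_trace R hu
  have hSv := sum_norm_mulVec_sq_le_re_trace S hv
  rw [hσA.2, RCLike.one_re] at hRu
  rw [hσB.2, RCLike.one_re] at hSv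
  rw [trace_mul_vecMulVec_star, star_schmidtVector_dotProduct_kronecker_mulVec]
  simp only [star_dotProduct_conjTranspose_mul_self_mulVec]
  exact re_sum_mul_inner_mul_inner_le (𝕜 := ℂ) hc hle _ _ hRu hSv

end SchmidtVector

section Channels

variable {m n : Type*} [Fintype m]

def replacementChannel (σ : Matrix n n ℂ) : Matrix m m ℂ →ₗ[ℂ] Matrix n n ℂ :=
  (traceLinearMap m ℂ ℂ).smulRight σ

theorem replacementChannel_apply (σ : Matrix n n ℂ) (ρ : Matrix m m ℂ) :
    replacementChannel σ ρ = ρ.trace • σ :=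
  rfl

variable [DecidableEq m]

theorem LinearMap.map_eq_sum_smul_single {M : Type*} [AddCommMonoid M] [Module ℂ M]
    (Λ : Matrix m m ℂ →ₗ[ℂ] M) (ρ : Matrix m m ℂ) :
    Λ ρ = ∑ i, ∑ j, ρ i j • Λ (Matrix.single i j 1) := by
  conv_lhs => rw [matrix_eq_sum_single ρ]
  simp only [map_sum, ← map_smul, smul_single, smul_eq_mul, mul_one]

def choiMatrix (Λ : Matrix m m ℂ →ₗ[ℂ] Matrix n n ℂ) : Matrix (m × n) (m × n) ℂ :=
  Matrix.of fun p q => Λ (single p.1 q.1 1) p.2 q.2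

theorem apply_eq_sum_choiMatrix (Λ : Matrix m m ℂ →ₗ[ℂ] Matrix n n ℂ) (ρ : Matrix m m ℂ)
    (p q : n) : Λ ρ p q = ∑ i, ∑ j, ρ i j * choiMatrix Λ (i, p) (j, q) := by
  simp [Λ.map_eq_sum_smul_single ρ, Matrix.sum_apply, choiMatrix]

theorem choiMatrix_replacementChannel (σ : Matrix n n ℂ) :
    choiMatrix (replacementChannel (m := m) σ) = 1 ⊗ₖ σ := by
  ext ⟨i, p⟩ ⟨j, q⟩
  by_cases h : i = j
  · simp [choiMatrix, replacementChannel_apply, h]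
  · simp [choiMatrix, replacementChannel_apply, h, trace_single_eq_of_ne]

variable [Fintype n] [DecidableEq n]

theorem posSemidef_apply_of_posSemidef_choiMatrix {Λ : Matrix m m ℂ →ₗ[ℂ] Matrix n n ℂ}
    (hΛ : (choiMatrix Λ).PosSemidef) {ρ : Matrix m m ℂ} (hρ : ρ.PosSemidef) :
    (Λ ρ).PosSemidef := by
  obtain ⟨B, rfl⟩ := hρ.exists_eq_conjTranspose_mul_self
  -- `Λ (B⋆B)` is a sum of compressions of the Choi matrix, one for each row of `B`.
  let K : m → Matrix (m × n) n ℂ := fun r => of fun jq q => B r jq.1 * (1 : Matrix n n ℂ) jq.2 q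
  have hK : Λ (Bᴴ * B) = ∑ r, (K r)ᴴ * choiMatrix Λ * K r := by
    ext p q
    simp [apply_eq_sum_choiMatrix, K, Matrix.sum_apply, mul_apply, Fintype.sum_prod_type,
      one_apply, sum_mul, apply_ite]
    rw [sum_comm]
    conv_lhs => enter [2, j]; rw [sum_comm]
    rw [sum_comm]
    refine sum_congr rfl fun r _ => sum_congr rfl fun j _ => sum_congr rfl fun i _ => ?_
    ring
  rw [hK]
  exact posSemidef_sum _ fun r _ => hΛ.conjTranspose_mul_mul_same _

theorem isDensity_vecMulVec_star {x : n → ℂ} (hx : star x ⬝ᵥ x = 1) :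
    IsDensity (vecMulVec x (star x)) :=
  ⟨posSemidef_vecMulVec_self_star x, by rw [trace_vecMulVec, dotProduct_comm, hx]⟩

theorem IsCPTP.isDensity_apply {Λ : Matrix m m ℂ →ₗ[ℂ] Matrix n n ℂ} (hΛ : IsCPTP Λ)
    {ρ : Matrix m m ℂ} (hρ : IsDensity ρ) : IsDensity (Λ ρ) :=
  ⟨posSemidef_apply_of_posSemidef_choiMatrix hΛ.1 hρ.1, (hΛ.2 ρ).trans hρ.2⟩

theorem isCPTP_replacementChannel {σ : Matrix n n ℂ} (hσ : IsDensity σ) :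
    IsCPTP (replacementChannel (m := m) σ) := by
  refine ⟨?_, fun ρ => ?_⟩
  · change (choiMatrix _).PosSemidef
    rw [choiMatrix_replacementChannel]
    exact PosSemidef.one.kronecker hσ.1
  · rw [replacementChannel_apply, trace_smul, hσ.2, smul_eq_mul, mul_one]

end Channels

section TensorMap

variable {a b a' b' : Type*} [Fintype a] [DecidableEq a] [Fintype b] [DecidableEq b]
  [Fintype a'] [DecidableEq a'] [Fintype b'] [DecidableEq b']
  (ΛA : Matrix a a ℂ →ₗ[ℂ] Matrix a' a' ℂ) (ΛB : Matrix b b ℂ →ₗ[ℂ] Matrix b' b' ℂ)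

noncomputable def tensorMapLinearMap :
    Matrix (a × b) (a × b) ℂ →ₗ[ℂ] Matrix (a' × b') (a' × b') ℂ where
  toFun := tensorMap ΛA ΛB
  map_add' x y := by simp only [tensorMap, Matrix.add_apply, add_smul, sum_add_distrib]
  map_smul' r x := by
    simp only [tensorMap, Matrix.smul_apply, smul_eq_mul, smul_sum, RingHom.id_apply, smul_smul]

theorem tensorMap_kronecker (ρA : Matrix a a ℂ) (ρB : Matrix b b ℂ) :
    tensorMap ΛA ΛB (ρA ⊗ₖ ρB) = ΛA ρA ⊗ₖ ΛB ρB := by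
  ext p q
  simp only [tensorMap, Matrix.sum_apply, Matrix.smul_apply, kroneckerMap_apply, smul_eq_mul,
    apply_eq_sum_choiMatrix ΛA ρA, apply_eq_sum_choiMatrix ΛB ρB, sum_mul_sum]
  refine sum_congr rfl fun i _ => ?_
  rw [sum_comm]
  refine sum_congr rfl fun k _ => sum_congr rfl fun j _ => sum_congr rfl fun l _ => ?_
  simp only [choiMatrix, of_apply]
  ring

theorem re_trace_tensorMap_sum_smul_kronecker_mul {k : Type*} [Fintype k]
    (Φ : Matrix (a' × b') (a' × b') ℂ) (w : k → ℝ) (ρA : k → Matrix a a ℂ)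
    (ρB : k → Matrix b b ℂ) :
    ((tensorMap ΛA ΛB (∑ i, (w i : ℂ) • ρA i ⊗ₖ ρB i) * Φ).trace).re
      = ∑ i, w i * ((tensorMap ΛA ΛB (ρA i ⊗ₖ ρB i) * Φ).trace).re := by
  change ((tensorMapLinearMap ΛA ΛB _ * Φ).trace).re = _
  simp only [map_sum, map_smul, sum_mul, trace_sum, Complex.re_sum, smul_mul_assoc, trace_smul,
    smul_eq_mul, Complex.re_ofReal_mul]
  rfl

end TensorMap

section Extraction

variable {ι a b a' b' : Type*} [Fintype ι] [Fintype a] [DecidableEq a] [Fintype b]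
  [DecidableEq b] [Fintype a'] [DecidableEq a'] [Fintype b'] [DecidableEq b']

theorem re_trace_tensorMap_kronecker_mul_schmidtVector_le {c : ι → ℝ} {lam : ℝ}
    (hc : ∀ s, 0 ≤ c s) (hle : ∀ s, c s ≤ lam) {u : ι → a' → ℂ} {v : ι → b' → ℂ}
    (hu : Orthonormal ℂ fun s => toLp 2 (u s)) (hv : Orthonormal ℂ fun s => toLp 2 (v s))
    (ΛA : Matrix a a ℂ →ₗ[ℂ] Matrix a' a' ℂ) (ΛB : Matrix b b ℂ →ₗ[ℂ] Matrix b' b' ℂ)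
    (hΛA : IsCPTP ΛA) (hΛB : IsCPTP ΛB) (ρA : Matrix a a ℂ) (ρB : Matrix b b ℂ)
    (hρA : IsDensity ρA) (hρB : IsDensity ρB) :
    ((tensorMap ΛA ΛB (ρA ⊗ₖ ρB) *
        vecMulVec (schmidtVector c u v) (star (schmidtVector c u v))).trace).re ≤ lam ^ 2 := by
  rw [tensorMap_kronecker]
  exact re_trace_kronecker_mul_schmidtVector_le hc hle hu hv (hΛA.isDensity_apply hρA)
    (hΛB.isDensity_apply hρB)

theorem re_trace_tensorMap_replacementChannel_kronecker_mul_schmidtVector [DecidableEq ι]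
    {c : ι → ℝ} {u : ι → a' → ℂ} {v : ι → b' → ℂ}
    (hu : ∀ s t, star (u s) ⬝ᵥ u t = if s = t then 1 else 0)
    (hv : ∀ s t, star (v s) ⬝ᵥ v t = if s = t then 1 else 0) (s₀ : ι)
    (ρA : Matrix a a ℂ) (ρB : Matrix b b ℂ) (hρA : IsDensity ρA) (hρB : IsDensity ρB) :
    ((tensorMap (replacementChannel (vecMulVec (u s₀) (star (u s₀))))
        (replacementChannel (vecMulVec (v s₀) (star (v s₀)))) (ρA ⊗ₖ ρB) *
        vecMulVec (schmidtVector c u v) (star (schmidtVector c u v))).trace).re = c s₀ ^ 2 := by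
  rw [tensorMap_kronecker, replacementChannel_apply, replacementChannel_apply, hρA.2, hρB.2,
    one_smul, one_smul, trace_vecMulVec_kronecker_vecMulVec_mul_schmidtVector hu hv, Complex.ofReal_re]

end Extraction

theorem extractability_separable_general {dA dB dA' dB' m : ℕ}
    (u : Fin m → Fin dA' → ℂ) (v : Fin m → Fin dB' → ℂ)
    (hu : ∀ s t, ∑ i, (starRingEnd ℂ) (u s i) * u t i = if s = t then 1 else 0)
    (hv : ∀ s t, ∑ j, (starRingEnd ℂ) (v s j) * v t j = if s = t then 1 else 0)
    (c : Fin m → ℝ) (hc : ∀ s, 0 ≤ c s)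
    (lam0 : ℝ) (hlam0 : IsGreatest (Set.range c) lam0)
    (φ : Fin dA' × Fin dB' → ℂ) (hφ : φ = fun p => ∑ s, (c s : ℂ) * u s p.1 * v s p.2)
    (Φ : Matrix (Fin dA' × Fin dB') (Fin dA' × Fin dB') ℂ)
    (hΦ : Φ = Matrix.of fun p q => φ p * (starRingEnd ℂ) (φ q))
    (ρ : Matrix (Fin dA × Fin dB) (Fin dA × Fin dB) ℂ)
    (hsep : ∃ (k : ℕ) (w : Fin k → ℝ) (ρA : Fin k → Matrix (Fin dA) (Fin dA) ℂ)
        (ρB : Fin k → Matrix (Fin dB) (Fin dB) ℂ),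
        (∀ i, 0 ≤ w i) ∧ (∑ i, w i = 1) ∧ (∀ i, IsDensity (ρA i)) ∧
        (∀ i, IsDensity (ρB i)) ∧ ρ = ∑ i, ((w i : ℝ) : ℂ) • ((ρA i) ⊗ₖ (ρB i))) :
    (sSup {r : ℝ |
        ∃ (ΛA : Matrix (Fin dA) (Fin dA) ℂ →ₗ[ℂ] Matrix (Fin dA') (Fin dA') ℂ)
          (ΛB : Matrix (Fin dB) (Fin dB) ℂ →ₗ[ℂ] Matrix (Fin dB') (Fin dB') ℂ),
          IsCPTP ΛA ∧ IsCPTP ΛB ∧ r = ((tensorMap ΛA ΛB ρ * Φ).trace).re}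
      = lam0 ^ 2) ∧
    (∀ (ΛA : Matrix (Fin dA) (Fin dA) ℂ →ₗ[ℂ] Matrix (Fin dA') (Fin dA') ℂ)
       (ΛB : Matrix (Fin dB) (Fin dB) ℂ →ₗ[ℂ] Matrix (Fin dB') (Fin dB') ℂ),
       IsCPTP ΛA → IsCPTP ΛB →
       ∀ (ρA : Matrix (Fin dA) (Fin dA) ℂ) (ρB : Matrix (Fin dB) (Fin dB) ℂ),
         IsDensity ρA → IsDensity ρB →
         ((tensorMap ΛA ΛB (ρA ⊗ₖ ρB) * Φ).trace).re ≤ lam0 ^ 2) ∧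
    (∀ (ρA : Matrix (Fin dA) (Fin dA) ℂ) (ρB : Matrix (Fin dB) (Fin dB) ℂ),
       IsDensity ρA → IsDensity ρB →
       ∃ (ΛA : Matrix (Fin dA) (Fin dA) ℂ →ₗ[ℂ] Matrix (Fin dA') (Fin dA') ℂ)
         (ΛB : Matrix (Fin dB) (Fin dB) ℂ →ₗ[ℂ] Matrix (Fin dB') (Fin dB') ℂ),
         IsCPTP ΛA ∧ IsCPTP ΛB ∧
         ((tensorMap ΛA ΛB (ρA ⊗ₖ ρB) * Φ).trace).re = lam0 ^ 2) := by
  obtain rfl : Φ = vecMulVec φ (star φ) := hΦ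
  obtain rfl : φ = schmidtVector c u v := hφ
  obtain ⟨k, w, ρA, ρB, hw0, hw1, hρA, hρB, rfl⟩ := hsep
  obtain ⟨s₀, rfl⟩ := hlam0.1
  have hbound := re_trace_tensorMap_kronecker_mul_schmidtVector_le (a := Fin dA) (b := Fin dB)
    hc (fun s => hlam0.2 ⟨s, rfl⟩) (orthonormal_toLp_iff.mpr hu) (orthonormal_toLp_iff.mpr hv)
  have hattain := re_trace_tensorMap_replacementChannel_kronecker_mul_schmidtVector
    (a := Fin dA) (b := Fin dB) (c := c) hu hv s₀
  have hσA₀ := isCPTP_replacementChannel (m := Fin dA) <|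
    isDensity_vecMulVec_star <| (hu s₀ s₀).trans (if_pos rfl)
  have hσB₀ := isCPTP_replacementChannel (m := Fin dB) <|
    isDensity_vecMulVec_star <| (hv s₀ s₀).trans (if_pos rfl)
  refine ⟨IsGreatest.csSup_eq ⟨⟨_, _, hσA₀, hσB₀, ?_⟩, ?_⟩, hbound,
    fun ρA ρB hρA hρB => ⟨_, _, hσA₀, hσB₀, hattain ρA ρB hρA hρB⟩⟩
  · rw [re_trace_tensorMap_sum_smul_kronecker_mul]
    simp only [hattain _ _ (hρA _) (hρB _), ← sum_mul, hw1, one_mul]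
  · rintro r ⟨ΛA, ΛB, hΛA, hΛB, rfl⟩
    rw [re_trace_tensorMap_sum_smul_kronecker_mul]
    calc _ ≤ ∑ i, w i * c s₀ ^ 2 := sum_le_sum fun i _ =>
          mul_le_mul_of_nonneg_left (hbound ΛA ΛB hΛA hΛB _ _ (hρA i) (hρB i)) (hw0 i)
      _ = c s₀ ^ 2 := by rw [← sum_mul, hw1, one_mul]

/-- For a pure target state `Φ` with Schmidt coefficients `c` (largest `λ₀`) and any
separable state `ρ`, the extractability equals `λ₀²`.  In particular, for any product
state and any local channels the extracted fidelity is at most `λ₀²`, and equality is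
attainable. -/
theorem extractability_separable {dA dB dA' dB' m : ℕ} [NeZero m]
    (u : Fin m → Fin dA' → ℂ) (v : Fin m → Fin dB' → ℂ)
    (hu : ∀ s t, ∑ i, (starRingEnd ℂ) (u s i) * u t i = if s = t then 1 else 0)
    (hv : ∀ s t, ∑ j, (starRingEnd ℂ) (v s j) * v t j = if s = t then 1 else 0)
    (c : Fin m → ℝ) (hc : ∀ s, 0 ≤ c s) (hnorm : ∑ s, (c s) ^ 2 = 1)
    (lam0 : ℝ) (hlam0 : IsGreatest (Set.range c) lam0)
    (φ : Fin dA' × Fin dB' → ℂ) (hφ : φ = fun p => ∑ s, (c s : ℂ) * u s p.1 * v s p.2)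
    (Φ : Matrix (Fin dA' × Fin dB') (Fin dA' × Fin dB') ℂ)
    (hΦ : Φ = Matrix.of fun p q => φ p * (starRingEnd ℂ) (φ q))
    (ρ : Matrix (Fin dA × Fin dB) (Fin dA × Fin dB) ℂ)
    (hsep : ∃ (k : ℕ) (w : Fin k → ℝ) (ρA : Fin k → Matrix (Fin dA) (Fin dA) ℂ)
        (ρB : Fin k → Matrix (Fin dB) (Fin dB) ℂ),
        (∀ i, 0 ≤ w i) ∧ (∑ i, w i = 1) ∧ (∀ i, IsDensity (ρA i)) ∧
        (∀ i, IsDensity (ρB i)) ∧ ρ = ∑ i, ((w i : ℝ) : ℂ) • ((ρA i) ⊗ₖ (ρB i))) :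
    (sSup {r : ℝ |
        ∃ (ΛA : Matrix (Fin dA) (Fin dA) ℂ →ₗ[ℂ] Matrix (Fin dA') (Fin dA') ℂ)
          (ΛB : Matrix (Fin dB) (Fin dB) ℂ →ₗ[ℂ] Matrix (Fin dB') (Fin dB') ℂ),
          IsCPTP ΛA ∧ IsCPTP ΛB ∧ r = ((tensorMap ΛA ΛB ρ * Φ).trace).re}
      = lam0 ^ 2) ∧
    (∀ (ΛA : Matrix (Fin dA) (Fin dA) ℂ →ₗ[ℂ] Matrix (Fin dA') (Fin dA') ℂ)
       (ΛB : Matrix (Fin dB) (Fin dB) ℂ →ₗ[ℂ] Matrix (Fin dB') (Fin dB') ℂ),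
       IsCPTP ΛA → IsCPTP ΛB →
       ∀ (ρA : Matrix (Fin dA) (Fin dA) ℂ) (ρB : Matrix (Fin dB) (Fin dB) ℂ),
         IsDensity ρA → IsDensity ρB →
         ((tensorMap ΛA ΛB (ρA ⊗ₖ ρB) * Φ).trace).re ≤ lam0 ^ 2) ∧
    (∀ (ρA : Matrix (Fin dA) (Fin dA) ℂ) (ρB : Matrix (Fin dB) (Fin dB) ℂ),
       IsDensity ρA → IsDensity ρB →
       ∃ (ΛA : Matrix (Fin dA) (Fin dA) ℂ →ₗ[ℂ] Matrix (Fin dA') (Fin dA') ℂ)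
         (ΛB : Matrix (Fin dB) (Fin dB) ℂ →ₗ[ℂ] Matrix (Fin dB') (Fin dB') ℂ),
         IsCPTP ΛA ∧ IsCPTP ΛB ∧
         ((tensorMap ΛA ΛB (ρA ⊗ₖ ρB) * Φ).trace).re = lam0 ^ 2) :=
  extractability_separable_general u v hu hv c hc lam0 hlam0 φ hφ Φ hΦ ρ hsep
end

section
/- For the tilted CHSH operator W_α = α A₀⊗𝟙 + A₀⊗(B₀+B₁) + A₁⊗(B₀−B₁) with qubit observables A_r = cos a · X + (−1)^r sin a · Z and B_r = cos b · X + (−1)^r sin b · Z, the maximal eigenvalue over all a, b ∈ [0, π/2] and all two-qubit states equals √(8 + 2α²) for α ∈ [0, 2), achieved at a = π/4 and b = arcsin(√((4−α²)/8)). -/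
open Matrix ComplexOrder Kronecker Real

/-- Pauli X. -/
def σx : Matrix (Fin 2) (Fin 2) ℂ := !![0, 1; 1, 0]
/-- Pauli Y. -/
def σy : Matrix (Fin 2) (Fin 2) ℂ := !![0, -Complex.I; Complex.I, 0]
/-- Pauli Z. -/
def σz : Matrix (Fin 2) (Fin 2) ℂ := !![1, 0; 0, -1]

/-- The tilted CHSH operator `W_α(a,b)` with qubit observables
`A_r = cos a·X + (−1)^r sin a·Z`, `B_r = cos b·X + (−1)^r sin b·Z`. -/
noncomputable def Wop (α a b : ℝ) : Matrix (Fin 2 × Fin 2) (Fin 2 × Fin 2) ℂ :=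
  let A0 := ((Real.cos a : ℝ) : ℂ) • σx + ((Real.sin a : ℝ) : ℂ) • σz
  let A1 := ((Real.cos a : ℝ) : ℂ) • σx - ((Real.sin a : ℝ) : ℂ) • σz
  let B0 := ((Real.cos b : ℝ) : ℂ) • σx + ((Real.sin b : ℝ) : ℂ) • σz
  let B1 := ((Real.cos b : ℝ) : ℂ) • σx - ((Real.sin b : ℝ) : ℂ) • σz
  ((α : ℝ) : ℂ) • (A0 ⊗ₖ (1 : Matrix (Fin 2) (Fin 2) ℂ)) + A0 ⊗ₖ (B0 + B1) + A1 ⊗ₖ (B0 - B1)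

/-!
In the product basis `Wop α a b` is a real matrix whose characteristic polynomial is the
biquadratic `x⁴ - (8 + 2α²) x² + κ` with
`κ = (4 - α²)² - 16 sin² 2a · sin² b · (4 cos² b - α²) ≥ 0`.
Hence every eigenvalue satisfies `x⁴ ≤ (8 + 2α²) x²`, i.e. `x ≤ √(8 + 2α²)`, and this value is
an eigenvalue as soon as `κ = 0`. At `a = π/4` one has `κ = (4 - α² - 8 sin² b)²`, which vanishes
for `sin² b = (4 - α²)/8`.
-/

noncomputable def tiltedMatrix (α a b : ℝ) : Matrix (Fin 4) (Fin 4) ℝ :=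
  !![α * sin a - 2 * sin a * sin b, 2 * sin a * cos b,
      α * cos a + 2 * cos a * sin b, 2 * cos a * cos b;
     2 * sin a * cos b, α * sin a + 2 * sin a * sin b,
      2 * cos a * cos b, α * cos a - 2 * cos a * sin b;
     α * cos a + 2 * cos a * sin b, 2 * cos a * cos b,
      -(α * sin a) + 2 * sin a * sin b, -(2 * sin a * cos b);
     2 * cos a * cos b, α * cos a - 2 * cos a * sin b,
      -(2 * sin a * cos b), -(α * sin a) - 2 * sin a * sin b]

theorem reindex_Wop (α a b : ℝ) :
    reindex finProdFinEquiv finProdFinEquiv (Wop α a b) =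
      (tiltedMatrix α a b).map Complex.ofRealHom := by
  ext i j
  fin_cases i <;> fin_cases j <;>
    simp [Wop, tiltedMatrix, σx, σz, finProdFinEquiv, Fin.divNat, Fin.modNat] <;> ring

noncomputable def tiltedConstCoeff (α a b : ℝ) : ℝ :=
  (4 - α ^ 2) ^ 2 - 16 * sin (2 * a) ^ 2 * sin b ^ 2 * (4 * cos b ^ 2 - α ^ 2)

theorem eval_charpoly_tiltedMatrix (α a b x : ℝ) :
    (tiltedMatrix α a b).charpoly.eval x =
      x ^ 4 - (8 + 2 * α ^ 2) * x ^ 2 + tiltedConstCoeff α a b := by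
  have ha := sin_sq_add_cos_sq a
  have hb := sin_sq_add_cos_sq b
  rw [eval_charpoly, tiltedConstCoeff, sin_two_mul]
  simp [tiltedMatrix, det_succ_row_zero, Fin.sum_univ_succ, Fin.succAbove]
  grind

theorem ofReal_mem_spectrum_Wop_iff (α a b r : ℝ) :
    (r : ℂ) ∈ spectrum ℂ (Wop α a b) ↔
      r ^ 4 - (8 + 2 * α ^ 2) * r ^ 2 + tiltedConstCoeff α a b = 0 := by
  rw [mem_spectrum_iff_isRoot_charpoly, ← charpoly_reindex finProdFinEquiv, reindex_Wop,
    charpoly_map, Polynomial.IsRoot, Polynomial.eval_map, ← Complex.ofRealHom_eq_coe,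
    Polynomial.eval₂_at_apply, eval_charpoly_tiltedMatrix, map_eq_zero]

theorem tiltedConstCoeff_nonneg (α a b : ℝ) : 0 ≤ tiltedConstCoeff α a b := by
  rcases le_total (4 * cos b ^ 2 - α ^ 2) 0 with hD | hD
  · have hterm : sin (2 * a) ^ 2 * sin b ^ 2 * (4 * cos b ^ 2 - α ^ 2) ≤ 0 :=
      mul_nonpos_of_nonneg_of_nonpos (by positivity) hD
    unfold tiltedConstCoeff
    nlinarith [sq_nonneg (4 - α ^ 2)]
  · have hterm : 0 ≤ (1 - sin (2 * a) ^ 2) * sin b ^ 2 * (4 * cos b ^ 2 - α ^ 2) :=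
      mul_nonneg (mul_nonneg (sub_nonneg.2 (sin_sq_le_one _)) (sq_nonneg _)) hD
    calc 0 ≤ (4 - α ^ 2 - 8 * sin b ^ 2) ^ 2 := sq_nonneg _
      _ = (4 - α ^ 2) ^ 2 - 16 * sin b ^ 2 * (4 * cos b ^ 2 - α ^ 2) := by rw [cos_sq' b]; ring
      _ ≤ tiltedConstCoeff α a b := by unfold tiltedConstCoeff; linarith

theorem tiltedConstCoeff_pi_div_four (α b : ℝ) :
    tiltedConstCoeff α (π / 4) b = (4 - α ^ 2 - 8 * sin b ^ 2) ^ 2 := by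
  rw [tiltedConstCoeff, show 2 * (π / 4) = π / 2 by ring, sin_pi_div_two, cos_sq' b]
  ring

theorem le_sqrt_of_biquadratic_eq_zero {p c x : ℝ} (hc : 0 ≤ c)
    (hx : x ^ 4 - p * x ^ 2 + c = 0) : x ≤ √p := by
  rcases le_or_gt x 0 with hx0 | hx0
  · exact hx0.trans (sqrt_nonneg p)
  · rw [le_sqrt' hx0]
    nlinarith [pow_pos hx0 2]

/-- The maximal quantum value of the tilted CHSH operator equals `√(8 + 2α²)`,
achieved at `a = π/4`, `b = arcsin √((4−α²)/8)`. -/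
theorem tilted_chsh_quantum_value (α : ℝ) (hα : α ∈ Set.Ico (0 : ℝ) 2) :
    (∀ a ∈ Set.Icc (0 : ℝ) (π/2), ∀ b ∈ Set.Icc (0 : ℝ) (π/2),
      ∀ r : ℝ, (r : ℂ) ∈ spectrum ℂ (Wop α a b) → r ≤ Real.sqrt (8 + 2 * α ^ 2)) ∧
    ((Real.sqrt (8 + 2 * α ^ 2) : ℝ) : ℂ) ∈
      spectrum ℂ (Wop α (π/4) (Real.arcsin (Real.sqrt ((4 - α ^ 2) / 8)))) := by
  refine ⟨fun a _ b _ r hr ↦ le_sqrt_of_biquadratic_eq_zero (tiltedConstCoeff_nonneg α a b)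
    ((ofReal_mem_spectrum_Wop_iff α a b r).1 hr), ?_⟩
  have hs : 0 ≤ (4 - α ^ 2) / 8 := by nlinarith [hα.1, hα.2]
  have hs1 : √((4 - α ^ 2) / 8) ≤ 1 := sqrt_le_one.2 (by nlinarith)
  have hp := sq_sqrt (by positivity : (0 : ℝ) ≤ 8 + 2 * α ^ 2)
  rw [ofReal_mem_spectrum_Wop_iff, tiltedConstCoeff_pi_div_four,
    sin_arcsin (by linarith [sqrt_nonneg ((4 - α ^ 2) / 8)]) hs1, sq_sqrt hs]
  linear_combination √(8 + 2 * α ^ 2) ^ 2 * hp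
end

section
/- For α ∈ [0, 2), the state |Φ^α⟩ = cos θ_α |00⟩ + sin θ_α |11⟩ with θ_α = (1/2) arcsin(√((4−α²)/(4+α²))) satisfies sin 2θ_α = √((4−α²)/(4+α²)) and cos 2θ_α = √(2α²/(4+α²)), and is the eigenstate of the tilted CHSH operator W_α(π/4, b*_α) (with b*_α = arcsin(√((4−α²)/8))) achieving eigenvalue √(8 + 2α²). -/
open Matrix ComplexOrder Kronecker Real

/-! `rot (π/8)` conjugates the observables `A₀, A₁` at `a = π/4` into `Z, X`, and the Hadamard
`qubitObs (π/4)` swaps `X` and `Z`, so in the rotated frame `W_α(π/4, b)` becomes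
`α Z⊗𝟙 + 2 cos b Z⊗Z + 2 sin b X⊗X`. This operator leaves `span {|00⟩, |11⟩}` invariant, and
`cos θ |00⟩ + sin θ |11⟩` is an eigenvector with eigenvalue `4 cos b` as soon as
`(α, 2 sin b) = 2 cos b (cos 2θ, sin 2θ)`. The angles `θ_α`, `b*_α` are chosen exactly so that
this holds, and then `4 cos b*_α = √(8 + 2α²)`. -/

namespace Matrix

variable {n R : Type*} [Fintype n]

lemma mulVec_mulVec_eq_smul_of_mul_eq_mul [CommSemiring R] {M N U : Matrix n n R} {μ : R}
    {v : n → R} (hMN : M * U = U * N) (h : N *ᵥ v = μ • v) : M *ᵥ (U *ᵥ v) = μ • (U *ᵥ v) := by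
  rw [mulVec_mulVec, hMN, ← mulVec_mulVec, h, mulVec_smul]

variable [DecidableEq n]

lemma mem_spectrum_of_mulVec_eq_smul [CommRing R] {M : Matrix n n R} {μ : R} {v : n → R}
    (hv : v ≠ 0) (h : M *ᵥ v = μ • v) : μ ∈ spectrum R M := by
  rw [← spectrum_toLin']
  exact (Module.End.hasEigenvalue_of_hasEigenvector
    ⟨Module.End.mem_eigenspace_iff.2 h, hv⟩).mem_spectrum

lemma star_mulVec_dotProduct_mulVec_self [CommSemiring R] [StarRing R] {U : Matrix n n R}
    (hU : Uᴴ * U = 1) (v : n → R) : star (U *ᵥ v) ⬝ᵥ (U *ᵥ v) = star v ⬝ᵥ v := by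
  rw [star_mulVec, dotProduct_mulVec, vecMul_vecMul, hU, vecMul_one]

lemma kronecker_conjTranspose_mul_self {m : Type*} [Fintype m] [DecidableEq m] [CommSemiring R]
    [StarRing R] {U : Matrix m m R} {V : Matrix n n R} (hU : Uᴴ * U = 1) (hV : Vᴴ * V = 1) :
    (U ⊗ₖ V)ᴴ * (U ⊗ₖ V) = 1 := by
  rw [conjTranspose_kronecker, ← mul_kronecker_mul, hU, hV, one_kronecker_one]

end Matrix

lemma Real.sin_arcsin_sqrt {x : ℝ} (h : x ≤ 1) : sin (arcsin √x) = √x :=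
  sin_arcsin (by linarith [sqrt_nonneg x]) (sqrt_le_one.2 h)

lemma Real.cos_arcsin_sqrt {x : ℝ} (h : 0 ≤ x) : cos (arcsin √x) = √(1 - x) := by
  rw [cos_arcsin, sq_sqrt h]

noncomputable section

def qubitObs (ψ : ℝ) : Matrix (Fin 2) (Fin 2) ℂ := ((cos ψ : ℝ) : ℂ) • σx + ((sin ψ : ℝ) : ℂ) • σz

def rot (φ : ℝ) : Matrix (Fin 2) (Fin 2) ℂ :=
  !![((cos φ : ℝ) : ℂ), -((sin φ : ℝ) : ℂ); ((sin φ : ℝ) : ℂ), ((cos φ : ℝ) : ℂ)]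

def chshNormalForm (α c s : ℝ) : Matrix (Fin 2 × Fin 2) (Fin 2 × Fin 2) ℂ :=
  (α : ℂ) • (σz ⊗ₖ 1) + (c : ℂ) • (σz ⊗ₖ σz) + (s : ℂ) • (σx ⊗ₖ σx)

def schmidtState (θ : ℝ) : Fin 2 × Fin 2 → ℂ := fun p =>
  if p = (0, 0) then ((cos θ : ℝ) : ℂ) else if p = (1, 1) then ((sin θ : ℝ) : ℂ) else 0

end

lemma qubitObs_eq_fin_two (ψ : ℝ) :
    qubitObs ψ =
      !![((sin ψ : ℝ) : ℂ), ((cos ψ : ℝ) : ℂ); ((cos ψ : ℝ) : ℂ), -((sin ψ : ℝ) : ℂ)] := by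
  ext i j; fin_cases i <;> fin_cases j <;> simp [qubitObs, σx, σz]

lemma qubitObs_zero : qubitObs 0 = σx := by simp [qubitObs]

lemma qubitObs_pi_div_two : qubitObs (π / 2) = σz := by simp [qubitObs]

lemma conjTranspose_qubitObs (ψ : ℝ) : (qubitObs ψ)ᴴ = qubitObs ψ := by
  rw [qubitObs_eq_fin_two]
  ext i j; fin_cases i <;> fin_cases j <;> simp [-Complex.ofReal_sin, -Complex.ofReal_cos]

lemma qubitObs_mul_qubitObs (χ ψ : ℝ) : qubitObs χ * qubitObs ψ = rot (ψ - χ) := by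
  rw [qubitObs_eq_fin_two, qubitObs_eq_fin_two, rot]
  ext i j; fin_cases i <;> fin_cases j <;>
    simp [mul_apply, Fin.sum_univ_two, Complex.sin_sub, Complex.cos_sub] <;> ring

lemma qubitObs_mul_rot (ψ φ : ℝ) : qubitObs ψ * rot φ = qubitObs (ψ + φ) := by
  rw [qubitObs_eq_fin_two, qubitObs_eq_fin_two, rot]
  ext i j; fin_cases i <;> fin_cases j <;>
    simp [mul_apply, Fin.sum_univ_two, Complex.sin_add, Complex.cos_add] <;> ring

lemma rot_mul_qubitObs (φ χ : ℝ) : rot φ * qubitObs χ = qubitObs (χ - φ) := by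
  rw [qubitObs_eq_fin_two, qubitObs_eq_fin_two, rot]
  ext i j; fin_cases i <;> fin_cases j <;>
    simp [mul_apply, Fin.sum_univ_two, Complex.sin_sub, Complex.cos_sub] <;> ring

lemma rot_zero : rot 0 = 1 := by simp [rot, one_fin_two]

lemma qubitObs_mul_self (ψ : ℝ) : qubitObs ψ * qubitObs ψ = 1 := by
  rw [qubitObs_mul_qubitObs, sub_self, rot_zero]

lemma qubitObs_conjTranspose_mul_self (ψ : ℝ) : (qubitObs ψ)ᴴ * qubitObs ψ = 1 := by
  rw [conjTranspose_qubitObs, qubitObs_mul_self]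

lemma rot_conjTranspose_mul_self (φ : ℝ) : (rot φ)ᴴ * rot φ = 1 := by
  -- `rot φ = qubitObs 0 * qubitObs φ` is a product of two Hermitian involutions.
  rw [← sub_zero φ, ← qubitObs_mul_qubitObs, conjTranspose_mul, conjTranspose_qubitObs,
    conjTranspose_qubitObs, mul_assoc, ← mul_assoc (qubitObs 0), qubitObs_mul_self, one_mul,
    qubitObs_mul_self]

lemma qubitObs_mul_rot_eq_rot_mul (ψ φ : ℝ) :
    qubitObs ψ * rot φ = rot φ * qubitObs (ψ + 2 * φ) := by
  rw [qubitObs_mul_rot, rot_mul_qubitObs]; ring_nf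

lemma qubitObs_mul_qubitObs_eq_qubitObs_mul (χ ψ : ℝ) :
    qubitObs χ * qubitObs ψ = qubitObs ψ * qubitObs (2 * ψ - χ) := by
  rw [qubitObs_mul_qubitObs, qubitObs_mul_qubitObs]; ring_nf

lemma Wop_eq (α a b : ℝ) : Wop α a b = (α : ℂ) • (qubitObs a ⊗ₖ 1)
    + ((2 * cos b : ℝ) : ℂ) • (qubitObs a ⊗ₖ σx)
    + ((2 * sin b : ℝ) : ℂ) • (qubitObs (-a) ⊗ₖ σz) := by
  ext ⟨i, j⟩ ⟨k, l⟩
  simp [Wop, qubitObs, kroneckerMap_apply]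
  ring

lemma Wop_pi_div_four_mul_kronecker (α b : ℝ) :
    Wop α (π / 4) b * (rot (π / 8) ⊗ₖ qubitObs (π / 4))
      = (rot (π / 8) ⊗ₖ qubitObs (π / 4)) * chshNormalForm α (2 * cos b) (2 * sin b) := by
  have hA₀ : qubitObs (π / 4) * rot (π / 8) = rot (π / 8) * σz := by
    rw [qubitObs_mul_rot_eq_rot_mul, ← qubitObs_pi_div_two]; ring_nf
  have hA₁ : qubitObs (-(π / 4)) * rot (π / 8) = rot (π / 8) * σx := by
    rw [qubitObs_mul_rot_eq_rot_mul, ← qubitObs_zero]; ring_nf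
  have hX : σx * qubitObs (π / 4) = qubitObs (π / 4) * σz := by
    rw [← qubitObs_zero, qubitObs_mul_qubitObs_eq_qubitObs_mul, ← qubitObs_pi_div_two]; ring_nf
  have hZ : σz * qubitObs (π / 4) = qubitObs (π / 4) * σx := by
    rw [← qubitObs_pi_div_two, qubitObs_mul_qubitObs_eq_qubitObs_mul, ← qubitObs_zero]; ring_nf
  simp only [Wop_eq, chshNormalForm, add_mul, mul_add, Matrix.smul_mul, Matrix.mul_smul,
    ← mul_kronecker_mul, hA₀, hA₁, hX, hZ, one_mul, mul_one]
lemma chshNormalForm_mulVec_schmidtState {α c s θ : ℝ} (hα : α = c * cos (2 * θ))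
    (hs : s = c * sin (2 * θ)) :
    chshNormalForm α c s *ᵥ schmidtState θ = ((2 * c : ℝ) : ℂ) • schmidtState θ := by
  have h₀ : (α + c) * cos θ + s * sin θ = 2 * c * cos θ := by
    rw [hα, hs, cos_two_mul, sin_two_mul]
    linear_combination (2 * c * cos θ) * sin_sq_add_cos_sq θ
  have h₁ : s * cos θ + (-α + c) * sin θ = 2 * c * sin θ := by
    rw [hα, hs, cos_two_mul, sin_two_mul]; ring
  ext ⟨i, j⟩
  fin_cases i <;> fin_cases j <;>
    simp [chshNormalForm, schmidtState, mulVec, dotProduct, Fintype.sum_prod_type, σx, σz,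
      kroneckerMap_apply, one_apply]
  · simpa using congrArg Complex.ofReal h₀
  · simpa using congrArg Complex.ofReal h₁

lemma star_schmidtState_dotProduct_self (θ : ℝ) : star (schmidtState θ) ⬝ᵥ schmidtState θ = 1 := by
  simp [schmidtState, dotProduct, Fintype.sum_prod_type, -Complex.ofReal_cos, -Complex.ofReal_sin]
  norm_cast
  rw [← sq, ← sq, cos_sq_add_sin_sq]

lemma tiltedCHSH_angle_relations {α : ℝ} (hα₀ : 0 ≤ α) (hα₂ : α ≤ 2) :
    sin (arcsin √((4 - α ^ 2) / (4 + α ^ 2))) = √((4 - α ^ 2) / (4 + α ^ 2)) ∧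
    cos (arcsin √((4 - α ^ 2) / (4 + α ^ 2))) = √(2 * α ^ 2 / (4 + α ^ 2)) ∧
    α = 2 * cos (arcsin √((4 - α ^ 2) / 8)) * cos (arcsin √((4 - α ^ 2) / (4 + α ^ 2))) ∧
    2 * sin (arcsin √((4 - α ^ 2) / 8))
      = 2 * cos (arcsin √((4 - α ^ 2) / 8)) * sin (arcsin √((4 - α ^ 2) / (4 + α ^ 2))) ∧
    √(8 + 2 * α ^ 2) = 2 * (2 * cos (arcsin √((4 - α ^ 2) / 8))) := by
  have hpos : 0 < 4 + α ^ 2 := by positivity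
  have hsq : 0 ≤ 4 - α ^ 2 := by nlinarith
  have hsin : sin (arcsin √((4 - α ^ 2) / (4 + α ^ 2))) = √((4 - α ^ 2) / (4 + α ^ 2)) :=
    sin_arcsin_sqrt ((div_le_one hpos).2 (by nlinarith))
  have hcos : cos (arcsin √((4 - α ^ 2) / (4 + α ^ 2))) = √(2 * α ^ 2 / (4 + α ^ 2)) := by
    rw [cos_arcsin_sqrt (div_nonneg hsq hpos.le)]; congr 1; field_simp; ring
  have hsin_b : sin (arcsin √((4 - α ^ 2) / 8)) = √((4 - α ^ 2) / 8) :=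
    sin_arcsin_sqrt (by nlinarith)
  have hcos_b : cos (arcsin √((4 - α ^ 2) / 8)) = √((4 + α ^ 2) / 8) := by
    rw [cos_arcsin_sqrt (div_nonneg hsq (by norm_num))]; congr 1; ring
  have hpos' : (0 : ℝ) ≤ (4 + α ^ 2) / 8 := by positivity
  refine ⟨hsin, hcos, ?_, ?_, ?_⟩ <;> rw [hcos_b]
  · rw [hcos, mul_assoc, ← sqrt_mul hpos',
      show (4 + α ^ 2) / 8 * (2 * α ^ 2 / (4 + α ^ 2)) = (α / 2) ^ 2 by field_simp; ring,
      sqrt_sq (by linarith)]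
    ring
  · rw [hsin_b, hsin, mul_assoc, ← sqrt_mul hpos']
    congr 2; field_simp
  · rw [show 8 + 2 * α ^ 2 = 4 ^ 2 * ((4 + α ^ 2) / 8) by ring, sqrt_mul (by norm_num),
      sqrt_sq (by norm_num)]
    ring

/-- For `α ∈ [0,2)`, the partially entangled state
`|Φ^α⟩ = cos θ_α |00⟩ + sin θ_α |11⟩` with
`θ_α = (1/2) arcsin √((4−α²)/(4+α²))` satisfies the stated trigonometric identities, and
(up to a fixed local basis change given by local unitaries `U_A, U_B`) is an eigenstate of
`W_α(π/4, b*_α)` with eigenvalue `√(8+2α²)`; in particular it achieves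
`⟨Φ^α| W_α |Φ^α⟩ = √(8+2α²)`. -/
theorem tilted_chsh_optimal_state (α : ℝ) (hα : α ∈ Set.Ico (0 : ℝ) 2)
    (θ : ℝ) (hθ : θ = (1/2) * Real.arcsin (Real.sqrt ((4 - α ^ 2) / (4 + α ^ 2))))
    (φ : Fin 2 × Fin 2 → ℂ)
    (hφ : φ = fun p => if p = (0, 0) then ((Real.cos θ : ℝ) : ℂ)
      else if p = (1, 1) then ((Real.sin θ : ℝ) : ℂ) else 0) :
    Real.sin (2 * θ) = Real.sqrt ((4 - α ^ 2) / (4 + α ^ 2)) ∧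
    Real.cos (2 * θ) = Real.sqrt (2 * α ^ 2 / (4 + α ^ 2)) ∧
    ((Real.sqrt (8 + 2 * α ^ 2) : ℝ) : ℂ) ∈
      spectrum ℂ (Wop α (π/4) (Real.arcsin (Real.sqrt ((4 - α ^ 2) / 8)))) ∧
    ∃ UA UB : Matrix (Fin 2) (Fin 2) ℂ, UAᴴ * UA = 1 ∧ UBᴴ * UB = 1 ∧
      (Wop α (π/4) (Real.arcsin (Real.sqrt ((4 - α ^ 2) / 8)))).mulVec
          ((UA ⊗ₖ UB).mulVec φ)
        = ((Real.sqrt (8 + 2 * α ^ 2) : ℝ) : ℂ) • (UA ⊗ₖ UB).mulVec φ ∧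
      star ((UA ⊗ₖ UB).mulVec φ) ⬝ᵥ
          (Wop α (π/4) (Real.arcsin (Real.sqrt ((4 - α ^ 2) / 8)))).mulVec
            ((UA ⊗ₖ UB).mulVec φ)
        = ((Real.sqrt (8 + 2 * α ^ 2) : ℝ) : ℂ) := by
  have h2θ : 2 * θ = arcsin √((4 - α ^ 2) / (4 + α ^ 2)) := by rw [hθ]; ring
  obtain ⟨hsin, hcos, hα_eq, hsin_b, hsqrt⟩ := tiltedCHSH_angle_relations hα.1 hα.2.le
  rw [← h2θ] at hsin hcos hα_eq hsin_b
  obtain rfl : φ = schmidtState θ := hφ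
  have heig := mulVec_mulVec_eq_smul_of_mul_eq_mul (Wop_pi_div_four_mul_kronecker α _)
    (chshNormalForm_mulVec_schmidtState hα_eq hsin_b)
  rw [← hsqrt] at heig
  have hnorm : star ((rot (π / 8) ⊗ₖ qubitObs (π / 4)) *ᵥ schmidtState θ)
      ⬝ᵥ ((rot (π / 8) ⊗ₖ qubitObs (π / 4)) *ᵥ schmidtState θ) = 1 := by
    rw [star_mulVec_dotProduct_mulVec_self (kronecker_conjTranspose_mul_self
      (rot_conjTranspose_mul_self _) (qubitObs_conjTranspose_mul_self _)),
      star_schmidtState_dotProduct_self]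
  refine ⟨hsin, hcos, mem_spectrum_of_mulVec_eq_smul (fun h => by simp [h] at hnorm) heig,
    rot (π / 8), qubitObs (π / 4), rot_conjTranspose_mul_self _, qubitObs_conjTranspose_mul_self _,
    heig, ?_⟩
  rw [heig, dotProduct_smul, hnorm, smul_eq_mul, mul_one]
end
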